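/- arXiv:1411.1909 — 8 statements merged into one kernel-verified Lean document; each statement's English description precedes it below -/
import Mathlib

section
/- Let f be a smooth normalized family on an interval I with ∂_ζf(ζ,t) ≠ 0 for |ζ| = 1, let q : I → ℝ with q(t) ≥ 0, and let P(·,t) be the associated Poisson extension of q(t)/|∂_ζf|²; assume P extends analytically in ζ to a neighborhood of the closed unit disk for each t and is jointly continuous in (ζ,t). If f solves the Löwner–Kufarev equation ∂_tf(ζ,t) = ζ·∂_ζf(ζ,t)·P(ζ,t) on 𝔻 × I, then {f(·,t)} is a subordination chain: for all s, t ∈ I with s ≤ t there exists an injective analytic map φ : 𝔻 → 𝔻 such that f(ζ,s) = f(φ(ζ),t) for all ζ ∈ 𝔻. -/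
/-
Follow the characteristics of the Löwner–Kufarev equation: solve `w' = -w P(w, τ)`, `w(s) = ζ`.
By the minimum principle the boundary values `q / |∂_ζ f|² ≥ 0` force `Re P ≥ 0` on the disk, so
`|w|` does not increase and the flow maps the disk into itself. The flow is holomorphic in `ζ`,
being a locally uniform limit of holomorphic Picard iterates, and injective by backward
uniqueness of solutions. The equation says precisely that `τ ↦ f(w(τ), τ)` is constant, so
`φ(ζ) = w(t)` gives `f(ζ, s) = f(φ(ζ), t)`.
-/

open Complex Metric Set

noncomputable section

open Filter Topology MeasureTheory intervalIntegral
open scoped Interval NNReal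

theorem DiffContOnCl.re_nonneg_of_forall_mem_frontier {E : Type*} [NormedAddCommGroup E]
    [NormedSpace ℂ E] [Nontrivial E] {g : E → ℂ} {U : Set E} (hU : Bornology.IsBounded U)
    (hg : DiffContOnCl ℂ g U) (hfr : ∀ z ∈ frontier U, 0 ≤ (g z).re) {z : E}
    (hz : z ∈ closure U) : 0 ≤ (g z).re := by
  -- maximum modulus for `exp (-g)`
  have h := norm_le_of_forall_mem_frontier_norm_le hU
    (differentiable_exp.comp_diffContOnCl hg.neg) (C := 1)
    (fun w hw => by simpa [norm_exp] using hfr w hw) hz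
  simpa [norm_exp] using h

theorem norm_exp_neg_sub_exp_neg_le {A B : ℂ} (hA : 0 ≤ A.re) (hB : 0 ≤ B.re) :
    ‖exp (-A) - exp (-B)‖ ≤ ‖A - B‖ := by
  have hderiv : ∀ z ∈ {z : ℂ | 0 ≤ z.re}, ‖deriv (fun z => exp (-z)) z‖ ≤ 1 := by
    intro z hz
    rw [((hasDerivAt_neg z).cexp).deriv, norm_mul, norm_neg, norm_one, mul_one, norm_exp]
    simpa using hz
  simpa using (convex_halfSpace_re_ge 0).norm_image_sub_le_of_norm_deriv_le
    (fun z _ => (differentiable_exp.comp differentiable_neg).differentiableAt) hderiv hB hA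

theorem Complex.lipschitzOnWith_closedBall_of_norm_le {E : Type*} [NormedAddCommGroup E]
    [NormedSpace ℂ E] {g : ℂ → E} {c : ℂ} {r R M : ℝ} (hrR : r < R)
    (hg : DifferentiableOn ℂ g (ball c R)) (hM : ∀ z ∈ ball c R, ‖g z‖ ≤ M) :
    LipschitzOnWith (2 * M / (R - r)).toNNReal g (closedBall c r) := by
  have hderiv : ∀ x ∈ closedBall c r, ‖deriv g x‖ ≤ 2 * M / (R - r) := by
    intro x hx
    have hsub : ball x (R - r) ⊆ ball c R := ball_subset_ball' (by
      linarith [mem_closedBall.mp hx])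
    refine norm_deriv_le_div_of_mapsTo_ball (hg.mono hsub) (fun w hw => ?_) (by linarith)
    rw [mem_closedBall, dist_eq_norm]
    calc ‖g w - g x‖ ≤ ‖g w‖ + ‖g x‖ := norm_sub_le _ _
      _ ≤ M + M := add_le_add (hM w (hsub hw)) (hM x (hsub (mem_ball_self (by linarith))))
      _ = 2 * M := by ring
  refine (convex_closedBall c r).lipschitzOnWith_of_nnnorm_deriv_le
    (fun x hx => hg.differentiableAt (isOpen_ball.mem_nhds ?_)) (fun x hx => ?_)
  · exact closedBall_subset_ball hrR hx
  · rw [← NNReal.coe_le_coe, coe_nnnorm]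
    exact (hderiv x hx).trans (Real.le_coe_toNNReal _)

theorem aestronglyMeasurable_of_hasDerivAt {𝕜 E α : Type*} [NontriviallyNormedField 𝕜]
    [NormedAddCommGroup E] [NormedSpace 𝕜 E] [MeasurableSpace α] {μ : Measure α}
    {F : 𝕜 → α → E} {F' : α → E} {x₀ : 𝕜} {s : Set 𝕜} (hs : s ∈ 𝓝 x₀)
    (hF : ∀ x ∈ s, AEStronglyMeasurable (F x) μ)
    (hF' : ∀ᵐ σ ∂μ, HasDerivAt (F · σ) (F' σ) x₀) : AEStronglyMeasurable F' μ := by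
  obtain ⟨y, hy, hys⟩ : ∃ y : ℕ → 𝕜, Tendsto y atTop (𝓝[≠] x₀) ∧ ∀ n, y n ∈ s :=
    exists_seq_forall_of_frequently
      (Eventually.frequently (mem_nhdsWithin_of_mem_nhds hs : s ∈ 𝓝[≠] x₀))
  refine aestronglyMeasurable_of_tendsto_ae atTop (f := fun n σ => slope (F · σ) x₀ (y n))
    (fun n => ?_) (hF'.mono fun σ hσ => (hasDerivAt_iff_tendsto_slope.mp hσ).comp hy)
  simp only [slope_def_module]
  exact ((hF _ (hys n)).sub (hF x₀ (mem_of_mem_nhds hs))).const_smul _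

theorem differentiableOn_intervalIntegral_of_norm_le {E : Type*} [NormedAddCommGroup E]
    [NormedSpace ℂ E] [CompleteSpace E] {F : ℂ → ℝ → E} {s : Set ℂ} (hs : IsOpen s) {a b M : ℝ}
    (hF_cont : ∀ z ∈ s, ContinuousOn (F z) [[a, b]])
    (hF_diff : ∀ σ ∈ [[a, b]], DifferentiableOn ℂ (F · σ) s)
    (hF_bdd : ∀ z ∈ s, ∀ σ ∈ [[a, b]], ‖F z σ‖ ≤ M) :
    DifferentiableOn ℂ (fun z => ∫ σ in a..b, F z σ) s := by
  intro x₀ hx₀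
  obtain ⟨ε, hε, hball⟩ := Metric.isOpen_iff.mp hs x₀ hx₀
  have hnhds : closedBall x₀ (ε / 2) ∈ 𝓝 x₀ := closedBall_mem_nhds x₀ (half_pos hε)
  have hmeas : ∀ z ∈ s, AEStronglyMeasurable (F z) (volume.restrict (Ι a b)) := fun z hz =>
    ((hF_cont z hz).mono uIoc_subset_uIcc).aestronglyMeasurable measurableSet_uIoc
  have hderiv : ∀ σ ∈ Ι a b, HasDerivAt (F · σ) (deriv (F · σ) x₀) x₀ := fun σ hσ =>
    ((hF_diff σ (uIoc_subset_uIcc hσ)).differentiableAt (hs.mem_nhds hx₀)).hasDerivAt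
  have hlip : ∀ σ ∈ Ι a b, LipschitzOnWith (Real.nnabs (2 * M / (ε - ε / 2))) (F · σ)
      (closedBall x₀ (ε / 2)) := fun σ hσ =>
    (lipschitzOnWith_closedBall_of_norm_le (half_lt_self hε)
      ((hF_diff σ (uIoc_subset_uIcc hσ)).mono hball)
      (fun z hz => hF_bdd z (hball hz) σ (uIoc_subset_uIcc hσ))).weaken
      (Real.toNNReal_le_iff_le_coe.mpr ((le_abs_self _).trans_eq (Real.coe_nnabs _).symm))
  exact (hasDerivAt_integral_of_dominated_loc_of_lip hnhds
    (eventually_of_mem (hs.mem_nhds hx₀) hmeas) ((hF_cont x₀ hx₀).intervalIntegrable)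
    (aestronglyMeasurable_of_hasDerivAt (hs.mem_nhds hx₀) hmeas
      ((ae_restrict_iff' measurableSet_uIoc).mpr (ae_of_all _ hderiv)))
    (ae_of_all _ hlip) intervalIntegrable_const
    (ae_of_all _ hderiv)).2.differentiableAt.differentiableWithinAt

theorem Complex.exists_lipschitzOnWith_closedBall {E : Type*} [NormedAddCommGroup E]
    [NormedSpace ℂ E] {G : ℂ → ℝ → E} {c : ℂ} {J : Set ℝ} (hJ : IsCompact J) {r R : ℝ}
    (hrR : r < R) (hG : ContinuousOn (fun p : ℂ × ℝ => G p.1 p.2) (ball c R ×ˢ J))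
    (hGd : ∀ τ ∈ J, DifferentiableOn ℂ (G · τ) (ball c R)) :
    ∃ K : ℝ≥0, ∀ τ ∈ J, LipschitzOnWith K (G · τ) (closedBall c r) := by
  obtain ⟨R', hrR', hR'R⟩ := exists_between hrR
  have hR' : closedBall c R' ⊆ ball c R := closedBall_subset_ball hR'R
  obtain ⟨M, hM⟩ := ((isCompact_closedBall c R').prod hJ).exists_bound_of_continuousOn
    (hG.mono (prod_mono hR' subset_rfl))
  exact ⟨_, fun τ hτ => lipschitzOnWith_closedBall_of_norm_le hrR'
    ((hGd τ hτ).mono (ball_subset_ball hR'R.le))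
    (fun z hz => hM (z, τ) ⟨ball_subset_closedBall hz, hτ⟩)⟩

theorem hasDerivWithinAt_integral_Icc_of_continuousOn {E : Type*} [NormedAddCommGroup E]
    [NormedSpace ℝ E] [CompleteSpace E] {g : ℝ → E} {a b τ : ℝ} (hg : ContinuousOn g (Icc a b))
    (hτ : τ ∈ Icc a b) :
    HasDerivWithinAt (fun u => ∫ σ in a..u, g σ) (g τ) (Icc a b) τ := by
  have : Fact (τ ∈ Icc a b) := ⟨hτ⟩
  exact integral_hasDerivWithinAt_right
    (hg.mono (uIcc_subset_Icc (left_mem_Icc.2 (hτ.1.trans hτ.2)) hτ)).intervalIntegrable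
    (hg.stronglyMeasurableAtFilter_nhdsWithin measurableSet_Icc τ) (hg τ hτ)

theorem tendstoUniformlyOn_limUnder_of_dist_le_summable {α β : Type*} [PseudoMetricSpace β]
    [CompleteSpace β] [Nonempty β] {F : ℕ → α → β} {s : Set α} {d : ℕ → ℝ} (hd : Summable d)
    (hF : ∀ n, ∀ x ∈ s, dist (F n x) (F (n + 1) x) ≤ d n) :
    TendstoUniformlyOn F (fun x => limUnder atTop (F · x)) atTop s := by
  have hdist : ∀ n, ∀ x ∈ s, dist (F n x) (limUnder atTop (F · x)) ≤ ∑' m, d (n + m) :=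
    fun n x hx => dist_le_tsum_of_dist_le_of_tendsto d (fun m => hF m x hx) hd
      (cauchySeq_of_dist_le_of_summable d (fun m => hF m x hx) hd).tendsto_limUnder n
  rw [Metric.tendstoUniformlyOn_iff]
  intro ε hε
  have htail : Tendsto (fun n => ∑' m, d (n + m)) atTop (𝓝 0) := by
    simpa only [add_comm] using tendsto_sum_nat_add d
  filter_upwards [htail.eventually (gt_mem_nhds hε)] with n hn x hx
  rw [dist_comm]
  exact (hdist n x hx).trans_lt hn

theorem norm_intervalIntegral_le_pow_div_factorial {E : Type*} [NormedAddCommGroup E]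
    [NormedSpace ℝ E] {f : ℝ → E} {a τ C K : ℝ} {n : ℕ} (haτ : a ≤ τ)
    (hf : ∀ σ ∈ Ioc a τ, ‖f σ‖ ≤ K * (C * (K * (σ - a)) ^ n / n.factorial)) :
    ‖∫ σ in a..τ, f σ‖ ≤ C * (K * (τ - a)) ^ (n + 1) / (n + 1).factorial := by
  have hint : ∫ σ in a..τ, K * (C * (K * (σ - a)) ^ n / n.factorial) =
      C * (K * (τ - a)) ^ (n + 1) / (n + 1).factorial := by
    rw [integral_congr (g := fun σ => K ^ (n + 1) * C / n.factorial * (σ - a) ^ n)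
        (fun σ _ => by simp only [mul_pow]; ring),
      intervalIntegral.integral_const_mul, integral_comp_sub_right (· ^ n), integral_pow,
      sub_self, zero_pow n.succ_ne_zero, sub_zero, Nat.factorial_succ, mul_pow]
    push_cast
    field_simp
  rw [← hint]
  refine norm_integral_le_of_norm_le haτ (ae_of_all _ hf) ?_
  exact Continuous.intervalIntegrable (by fun_prop) _ _

theorem HasFDerivAt.hasDerivAt_comp_graph {E : Type*} [NormedAddCommGroup E] [NormedSpace ℂ E]
    {f : ℂ → ℝ → E} {w : ℝ → ℂ} {τ : ℝ} {D : ℂ × ℝ →L[ℝ] E} {fz ft : E} {w' : ℂ}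
    (hf : HasFDerivAt (fun p : ℂ × ℝ => f p.1 p.2) D (w τ, τ)) (hz : HasDerivAt (f · τ) fz (w τ))
    (ht : HasDerivAt (f (w τ)) ft τ) (hw : HasDerivAt w w' τ) :
    HasDerivAt (fun σ => f (w σ) σ) (w' • fz + ft) τ := by
  have hz' := hf.comp (w τ) (hasFDerivAt_prodMk_left (𝕜 := ℝ) (w τ) τ)
  have ht' := hf.comp τ (hasFDerivAt_prodMk_right (𝕜 := ℝ) (w τ) τ)
  have hDz := hz'.unique (hz.hasFDerivAt.restrictScalars ℝ)
  have hDt := ht'.unique ht.hasFDerivAt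
  have hsplit : D (w', 1) = w' • fz + ft := by
    have h1 := congrArg (· w') hDz
    have h2 := congrArg (· 1) hDt
    simp only [ContinuousLinearMap.comp_apply, ContinuousLinearMap.inl_apply,
      ContinuousLinearMap.inr_apply, ContinuousLinearMap.coe_restrictScalars',
      ContinuousLinearMap.toSpanSingleton_apply, one_smul] at h1 h2
    rw [← h1, ← h2, ← map_add, Prod.mk_add_mk, add_zero, zero_add]
  rw [← hsplit]
  exact hf.comp_hasDerivAt (f := fun σ => (w σ, σ)) τ (hw.prodMk (hasDerivAt_id' τ))

theorem eq_of_transport_equation {f : ℂ → ℝ → ℂ} {U : Set ℂ} {I : Set ℝ}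
    (hU : IsOpen U) (hf : ContDiffOn ℝ 1 (fun p : ℂ × ℝ => f p.1 p.2) (U ×ˢ I))
    (hfz : ∀ τ ∈ I, DifferentiableOn ℂ (f · τ) U) {w w' : ℝ → ℂ} {a b : ℝ} (hab : a ≤ b)
    (hI : Icc a b ⊆ I) (hwU : MapsTo w (Icc a b) U)
    (hw : ∀ τ ∈ Icc a b, HasDerivWithinAt w (w' τ) (Icc a b) τ)
    (htransport : ∀ τ ∈ Ioo a b, deriv (f (w τ)) τ = -(w' τ * deriv (f · τ) (w τ))) :
    f (w a) a = f (w b) b := by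
  have hwc : ContinuousOn w (Icc a b) := fun τ hτ => (hw τ hτ).continuousWithinAt
  have hcont : ContinuousOn (fun τ => f (w τ) τ) (Icc a b) :=
    hf.continuousOn.comp (hwc.prodMk continuousOn_id) fun _ hτ => ⟨hwU hτ, hI hτ⟩
  have hderiv : ∀ τ ∈ Ioo a b, HasDerivAt (fun σ => f (w σ) σ) 0 τ := by
    intro τ hτ
    have hτI : Icc a b ∈ 𝓝 τ := Icc_mem_nhds hτ.1 hτ.2
    have hwτ : U ∈ 𝓝 (w τ) := hU.mem_nhds (hwU (Ioo_subset_Icc_self hτ))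
    have hD := ((hf.contDiffAt (prod_mem_nhds hwτ (mem_of_superset hτI hI))).differentiableAt
      one_ne_zero).hasFDerivAt
    have hft : DifferentiableAt ℝ (f (w τ)) τ :=
      (hD.comp τ (hasFDerivAt_prodMk_right (𝕜 := ℝ) (w τ) τ)).differentiableAt
    have hfz' := ((hfz τ (hI (Ioo_subset_Icc_self hτ))).differentiableAt hwτ).hasDerivAt
    have h := hD.hasDerivAt_comp_graph hfz' hft.hasDerivAt
      ((hw τ (Ioo_subset_Icc_self hτ)).hasDerivAt hτI)
    rwa [htransport τ hτ, smul_eq_mul, add_neg_cancel] at h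
  have h := integral_eq_sub_of_hasDerivAt_of_le hab hcont hderiv intervalIntegrable_const
  rw [intervalIntegral.integral_zero] at h
  exact (sub_eq_zero.mp h.symm).symm

theorem DifferentiableOn.of_forall_lt_radius {E : Type*} [NormedAddCommGroup E]
    [NormedSpace ℂ E] {g : ℂ → E} {c : ℂ} {R : ℝ}
    (hg : ∀ r < R, DifferentiableOn ℂ g (ball c r)) : DifferentiableOn ℂ g (ball c R) := by
  intro z hz
  obtain ⟨r, hzr, hrR⟩ := exists_between (mem_ball.mp hz)
  exact ((hg r hrR).differentiableAt (isOpen_ball.mem_nhds (mem_ball.mpr hzr))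
    ).differentiableWithinAt

structure IsHerglotzFamily (P : ℂ → ℝ → ℂ) (J : Set ℝ) : Prop where
  continuousOn : ContinuousOn (fun p : ℂ × ℝ => P p.1 p.2) (ball 0 1 ×ˢ J)
  differentiableOn : ∀ τ ∈ J, DifferentiableOn ℂ (P · τ) (ball 0 1)
  re_nonneg : ∀ τ ∈ J, ∀ z ∈ ball (0 : ℂ) 1, 0 ≤ (P z τ).re

theorem IsHerglotzFamily.of_re_nonneg_sphere {P : ℂ → ℝ → ℂ} {J : Set ℝ} {V : Set ℂ}
    (hVD : closedBall (0 : ℂ) 1 ⊆ V) (hP : ContinuousOn (fun p : ℂ × ℝ => P p.1 p.2) (V ×ˢ J))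
    (hPd : ∀ τ ∈ J, DifferentiableOn ℂ (P · τ) V)
    (hre : ∀ τ ∈ J, ∀ z ∈ sphere (0 : ℂ) 1, 0 ≤ (P z τ).re) : IsHerglotzFamily P J where
  continuousOn := hP.mono (prod_mono (ball_subset_closedBall.trans hVD) subset_rfl)
  differentiableOn τ hτ := (hPd τ hτ).mono (ball_subset_closedBall.trans hVD)
  re_nonneg τ hτ z hz := DiffContOnCl.re_nonneg_of_forall_mem_frontier isBounded_ball
    ((hPd τ hτ).mono (by rwa [closure_ball _ one_ne_zero])).diffContOnCl
    (by rw [frontier_ball _ one_ne_zero]; exact hre τ hτ) (subset_closure hz)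

/-- Picard iterates for `w' = -w P(w, τ)`, `w a = ζ`, written multiplicatively as
`w = ζ exp (-∫ P(w))` so that they stay in the disk when `Re P ≥ 0`. -/
def loewnerIterate (P : ℂ → ℝ → ℂ) (a : ℝ) : ℕ → ℂ → ℝ → ℂ
  | 0 => fun ζ _ => ζ
  | n + 1 => fun ζ τ => ζ * exp (-∫ σ in a..τ, P (loewnerIterate P a n ζ σ) σ)

/-- Junk (an arbitrary `limUnder`) unless the iterates converge, which they do for `ζ ∈ 𝔻` and
`τ ∈ [a, b]` when `P` is a Herglotz family on `[a, b]`. -/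
def loewnerFlow (P : ℂ → ℝ → ℂ) (a : ℝ) (ζ : ℂ) (τ : ℝ) : ℂ :=
  limUnder atTop fun n => loewnerIterate P a n ζ τ

theorem loewnerFlow_self (P : ℂ → ℝ → ℂ) (a : ℝ) (ζ : ℂ) : loewnerFlow P a ζ a = ζ := by
  refine (tendsto_const_nhds.congr fun n => ?_).limUnder_eq
  cases n <;> simp [loewnerIterate]

namespace IsHerglotzFamily

variable {P : ℂ → ℝ → ℂ} {a b : ℝ} (hP : IsHerglotzFamily P (Icc a b))
include hP

theorem exists_norm_le {r : ℝ} (hr : r < 1) :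
    ∃ M, ∀ z ∈ closedBall (0 : ℂ) r, ∀ τ ∈ Icc a b, ‖P z τ‖ ≤ M := by
  obtain ⟨M, hM⟩ := ((isCompact_closedBall (0 : ℂ) r).prod isCompact_Icc
    ).exists_bound_of_continuousOn
      (hP.continuousOn.mono (prod_mono (closedBall_subset_ball hr) subset_rfl))
  exact ⟨M, fun z hz τ hτ => hM (z, τ) ⟨hz, hτ⟩⟩

theorem continuousOn_comp {w : ℝ → ℂ} (hw : ContinuousOn w (Icc a b))
    (hw1 : MapsTo w (Icc a b) (ball 0 1)) : ContinuousOn (fun σ => P (w σ) σ) (Icc a b) :=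
  hP.continuousOn.comp (hw.prodMk continuousOn_id) fun _ hσ => ⟨hw1 hσ, hσ⟩

theorem intervalIntegrable_comp {w : ℝ → ℂ} (hw : ContinuousOn w (Icc a b))
    (hw1 : MapsTo w (Icc a b) (ball 0 1)) {τ : ℝ} (hτ : τ ∈ Icc a b) :
    IntervalIntegrable (fun σ => P (w σ) σ) volume a τ :=
  ((hP.continuousOn_comp hw hw1).mono (uIcc_subset_Icc (left_mem_Icc.2 (hτ.1.trans hτ.2)) hτ)
    ).intervalIntegrable

theorem re_integral_nonneg {w : ℝ → ℂ} (hw : ContinuousOn w (Icc a b))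
    (hw1 : MapsTo w (Icc a b) (ball 0 1)) {τ : ℝ} (hτ : τ ∈ Icc a b) :
    0 ≤ (∫ σ in a..τ, P (w σ) σ).re := by
  have hsub : Icc a τ ⊆ Icc a b := Icc_subset_Icc_right hτ.2
  rw [← reCLM_apply, ← reCLM.intervalIntegral_comp_comm (hP.intervalIntegrable_comp hw hw1 hτ)]
  exact integral_nonneg hτ.1 fun σ hσ => hP.re_nonneg σ (hsub hσ) _ (hw1 (hsub hσ))

theorem norm_mul_exp_neg_integral_le {w : ℝ → ℂ} (hw : ContinuousOn w (Icc a b))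
    (hw1 : MapsTo w (Icc a b) (ball 0 1)) (ζ : ℂ) {τ : ℝ} (hτ : τ ∈ Icc a b) :
    ‖ζ * exp (-∫ σ in a..τ, P (w σ) σ)‖ ≤ ‖ζ‖ := by
  rw [norm_mul, norm_exp, neg_re]
  exact mul_le_of_le_one_right (norm_nonneg ζ)
    (Real.exp_le_one_iff.mpr (neg_nonpos.mpr (hP.re_integral_nonneg hw hw1 hτ)))

theorem hasDerivWithinAt_mul_exp_neg_integral {w : ℝ → ℂ} (hw : ContinuousOn w (Icc a b))
    (hw1 : MapsTo w (Icc a b) (ball 0 1)) (ζ : ℂ) {τ : ℝ} (hτ : τ ∈ Icc a b) :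
    HasDerivWithinAt (fun τ => ζ * exp (-∫ σ in a..τ, P (w σ) σ))
      (-(ζ * exp (-∫ σ in a..τ, P (w σ) σ)) * P (w τ) τ) (Icc a b) τ :=
  (((hasDerivWithinAt_integral_Icc_of_continuousOn (hP.continuousOn_comp hw hw1)
    hτ).fun_neg.cexp).const_mul ζ).congr_deriv (by ring)

theorem mapsTo_loewnerIterate_and_continuousOn (n : ℕ) {ζ : ℂ} (hζ : ζ ∈ ball (0 : ℂ) 1) :
    MapsTo (loewnerIterate P a n ζ) (Icc a b) (closedBall 0 ‖ζ‖) ∧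
      ContinuousOn (loewnerIterate P a n ζ) (Icc a b) := by
  induction n with
  | zero => exact ⟨fun _ _ => mem_closedBall_zero_iff.mpr le_rfl, continuousOn_const⟩
  | succ n ih =>
    have hw1 : MapsTo (loewnerIterate P a n ζ) (Icc a b) (ball 0 1) :=
      ih.1.mono_right (closedBall_subset_ball (mem_ball_zero_iff.mp hζ))
    exact ⟨fun τ hτ => mem_closedBall_zero_iff.mpr
        (hP.norm_mul_exp_neg_integral_le ih.2 hw1 ζ hτ),
      fun τ hτ => (hP.hasDerivWithinAt_mul_exp_neg_integral ih.2 hw1 ζ hτ).continuousWithinAt⟩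

theorem differentiableOn_loewnerIterate (n : ℕ) {τ : ℝ} (hτ : τ ∈ Icc a b) :
    DifferentiableOn ℂ (loewnerIterate P a n · τ) (ball 0 1) := by
  induction n generalizing τ with
  | zero => exact differentiableOn_id
  | succ n ih =>
    refine differentiableOn_id.mul (DifferentiableOn.cexp (DifferentiableOn.neg ?_))
    refine DifferentiableOn.of_forall_lt_radius fun r hr => ?_
    obtain ⟨M, hM⟩ := hP.exists_norm_le hr
    have hsub : [[a, τ]] ⊆ Icc a b := by
      rw [uIcc_of_le hτ.1]; exact Icc_subset_Icc_right hτ.2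
    have hr1 : ball (0 : ℂ) r ⊆ ball 0 1 := ball_subset_ball hr.le
    have hmem : ∀ z ∈ ball (0 : ℂ) r, ∀ σ ∈ Icc a b, loewnerIterate P a n z σ ∈ closedBall 0 r :=
      fun z hz σ hσ => closedBall_subset_closedBall (mem_ball_zero_iff.mp hz).le
        ((hP.mapsTo_loewnerIterate_and_continuousOn n (hr1 hz)).1 hσ)
    refine differentiableOn_intervalIntegral_of_norm_le isOpen_ball
      (fun z hz => ?_) (fun σ hσ => ?_) (fun z hz σ hσ => hM _ (hmem z hz σ (hsub hσ)) σ (hsub hσ))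
    · have h := hP.mapsTo_loewnerIterate_and_continuousOn n (hr1 hz)
      exact (hP.continuousOn_comp h.2 fun σ hσ => closedBall_subset_ball hr (hmem z hz σ hσ)).mono
        hsub
    · exact (hP.differentiableOn σ (hsub hσ)).comp ((ih (hsub hσ)).mono hr1)
        fun z hz => closedBall_subset_ball hr (hmem z hz σ (hsub hσ))

/-- The factorial makes the iterates converge on all of `[a, b]`, with no need to subdivide. -/
theorem norm_loewnerIterate_succ_sub_le {r : ℝ} (hr : r < 1) {K : ℝ≥0}
    (hK : ∀ τ ∈ Icc a b, LipschitzOnWith K (P · τ) (closedBall 0 r)) (n : ℕ) {ζ : ℂ}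
    (hζ : ζ ∈ closedBall (0 : ℂ) r) {τ : ℝ} (hτ : τ ∈ Icc a b) :
    ‖loewnerIterate P a (n + 1) ζ τ - loewnerIterate P a n ζ τ‖ ≤
      2 * (K * (τ - a)) ^ n / n.factorial := by
  have hζ1 : ζ ∈ ball (0 : ℂ) 1 := closedBall_subset_ball hr hζ
  have hζr : ‖ζ‖ ≤ r := mem_closedBall_zero_iff.mp hζ
  have hspec := fun m => hP.mapsTo_loewnerIterate_and_continuousOn m hζ1
  have hmem : ∀ m, MapsTo (loewnerIterate P a m ζ) (Icc a b) (closedBall 0 r) := fun m =>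
    (hspec m).1.mono_right (closedBall_subset_closedBall hζr)
  have hball : ∀ m, MapsTo (loewnerIterate P a m ζ) (Icc a b) (ball 0 1) := fun m =>
    (hmem m).mono_right (closedBall_subset_ball hr)
  induction n generalizing τ with
  | zero =>
    have h1 := hP.norm_mul_exp_neg_integral_le (hspec 0).2 (hball 0) ζ hτ
    change ‖ζ * exp (-∫ σ in a..τ, P ζ σ)‖ ≤ ‖ζ‖ at h1
    simp only [loewnerIterate, pow_zero, Nat.factorial_zero, Nat.cast_one, div_one, mul_one]
    linarith [norm_sub_le (ζ * exp (-∫ σ in a..τ, P ζ σ)) ζ, mem_ball_zero_iff.mp hζ1]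
  | succ n ih =>
    set A := ∫ σ in a..τ, P (loewnerIterate P a (n + 1) ζ σ) σ
    set B := ∫ σ in a..τ, P (loewnerIterate P a n ζ σ) σ
    have hdiff : loewnerIterate P a (n + 2) ζ τ - loewnerIterate P a (n + 1) ζ τ =
        ζ * (exp (-A) - exp (-B)) := (mul_sub _ _ _).symm
    have hAB : ‖A - B‖ ≤ 2 * (K * (τ - a)) ^ (n + 1) / (n + 1).factorial := by
      rw [← integral_sub (hP.intervalIntegrable_comp (hspec _).2 (hball _) hτ)
        (hP.intervalIntegrable_comp (hspec _).2 (hball _) hτ)]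
      refine norm_intervalIntegral_le_pow_div_factorial hτ.1 fun σ hσ => ?_
      have hσ' : σ ∈ Icc a b := ⟨hσ.1.le, hσ.2.trans hτ.2⟩
      calc _ ≤ K * ‖loewnerIterate P a (n + 1) ζ σ - loewnerIterate P a n ζ σ‖ :=
            (hK σ hσ').norm_sub_le (hmem _ hσ') (hmem _ hσ')
        _ ≤ K * (2 * (K * (σ - a)) ^ n / n.factorial) := by gcongr; exact ih hσ'
    calc _ = ‖ζ‖ * ‖exp (-A) - exp (-B)‖ := by rw [hdiff, norm_mul]
      _ ≤ 1 * ‖A - B‖ := mul_le_mul (mem_ball_zero_iff.mp hζ1).le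
          (norm_exp_neg_sub_exp_neg_le (hP.re_integral_nonneg (hspec _).2 (hball _) hτ)
            (hP.re_integral_nonneg (hspec _).2 (hball _) hτ)) (norm_nonneg _) zero_le_one
      _ ≤ _ := by rw [one_mul]; exact hAB

theorem tendstoUniformlyOn_loewnerIterate {r : ℝ} (hr : r < 1) :
    TendstoUniformlyOn (fun n (p : ℂ × ℝ) => loewnerIterate P a n p.1 p.2)
      (fun p => loewnerFlow P a p.1 p.2) atTop (closedBall 0 r ×ˢ Icc a b) := by
  obtain ⟨K, hK⟩ := exists_lipschitzOnWith_closedBall isCompact_Icc hr hP.continuousOn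
    hP.differentiableOn
  refine tendstoUniformlyOn_limUnder_of_dist_le_summable
    (d := fun n => 2 * (K * (b - a)) ^ n / n.factorial)
    (by simpa only [mul_div_assoc] using (Real.summable_pow_div_factorial _).mul_left 2)
    fun n p hp => ?_
  rw [dist_comm, dist_eq_norm]
  refine (hP.norm_loewnerIterate_succ_sub_le hr hK n hp.1 hp.2).trans ?_
  have hK0 : 0 ≤ (K : ℝ) * (p.2 - a) := mul_nonneg K.2 (sub_nonneg.mpr hp.2.1)
  have hKb : (K : ℝ) * (p.2 - a) ≤ K * (b - a) := by gcongr; exact hp.2.2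
  gcongr

theorem tendsto_loewnerIterate {ζ : ℂ} (hζ : ζ ∈ ball (0 : ℂ) 1) {τ : ℝ} (hτ : τ ∈ Icc a b) :
    Tendsto (fun n => loewnerIterate P a n ζ τ) atTop (𝓝 (loewnerFlow P a ζ τ)) :=
  (hP.tendstoUniformlyOn_loewnerIterate (mem_ball_zero_iff.mp hζ)).tendsto_at (x := (ζ, τ))
    ⟨mem_closedBall_zero_iff.mpr le_rfl, hτ⟩

theorem mapsTo_loewnerFlow {ζ : ℂ} (hζ : ζ ∈ ball (0 : ℂ) 1) :
    MapsTo (loewnerFlow P a ζ) (Icc a b) (closedBall 0 ‖ζ‖) := fun _ hτ =>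
  isClosed_closedBall.mem_of_tendsto (hP.tendsto_loewnerIterate hζ hτ)
    (Eventually.of_forall fun n => (hP.mapsTo_loewnerIterate_and_continuousOn n hζ).1 hτ)

theorem continuousOn_loewnerFlow {ζ : ℂ} (hζ : ζ ∈ ball (0 : ℂ) 1) :
    ContinuousOn (loewnerFlow P a ζ) (Icc a b) :=
  (((hP.tendstoUniformlyOn_loewnerIterate (mem_ball_zero_iff.mp hζ)).comp (ζ, ·)).mono
    fun _ hτ => ⟨mem_closedBall_zero_iff.mpr le_rfl, hτ⟩).continuousOn
    (Frequently.of_forall fun n => (hP.mapsTo_loewnerIterate_and_continuousOn n hζ).2)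

theorem differentiableOn_loewnerFlow {τ : ℝ} (hτ : τ ∈ Icc a b) :
    DifferentiableOn ℂ (loewnerFlow P a · τ) (ball 0 1) :=
  DifferentiableOn.of_forall_lt_radius fun _ hr =>
    ((((hP.tendstoUniformlyOn_loewnerIterate hr).comp (·, τ)).mono
      fun _ hz => ⟨ball_subset_closedBall hz, hτ⟩).tendstoLocallyUniformlyOn).differentiableOn
      (Eventually.of_forall fun n => (hP.differentiableOn_loewnerIterate n hτ).mono
        (ball_subset_ball hr.le)) isOpen_ball

theorem loewnerFlow_eq_mul_exp {ζ : ℂ} (hζ : ζ ∈ ball (0 : ℂ) 1) {τ : ℝ} (hτ : τ ∈ Icc a b) :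
    loewnerFlow P a ζ τ = ζ * exp (-∫ σ in a..τ, P (loewnerFlow P a ζ σ) σ) := by
  obtain ⟨M, hM⟩ := hP.exists_norm_le (mem_ball_zero_iff.mp hζ)
  have hsub : Ι a τ ⊆ Icc a b := by
    rw [uIoc_of_le hτ.1]; exact Ioc_subset_Icc_self.trans (Icc_subset_Icc_right hτ.2)
  have hball : ∀ n, MapsTo (loewnerIterate P a n ζ) (Icc a b) (ball 0 1) := fun n =>
    (hP.mapsTo_loewnerIterate_and_continuousOn n hζ).1.mono_right
      (closedBall_subset_ball (mem_ball_zero_iff.mp hζ))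
  have hint : Tendsto (fun n => ∫ σ in a..τ, P (loewnerIterate P a n ζ σ) σ) atTop
      (𝓝 (∫ σ in a..τ, P (loewnerFlow P a ζ σ) σ)) := by
    refine tendsto_integral_filter_of_dominated_convergence (fun _ => M)
      (Eventually.of_forall fun n => ?_) (Eventually.of_forall fun n => ae_of_all _ ?_)
      intervalIntegrable_const (ae_of_all _ fun σ hσ => ?_)
    · exact ((hP.continuousOn_comp (hP.mapsTo_loewnerIterate_and_continuousOn n hζ).2
        (hball n)).mono hsub).aestronglyMeasurable measurableSet_uIoc
    · exact fun σ hσ => hM _ ((hP.mapsTo_loewnerIterate_and_continuousOn n hζ).1 (hsub hσ)) σ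
        (hsub hσ)
    · have hΦ : loewnerFlow P a ζ σ ∈ ball 0 1 :=
        closedBall_subset_ball (mem_ball_zero_iff.mp hζ) (hP.mapsTo_loewnerFlow hζ (hsub hσ))
      exact (((hP.differentiableOn σ (hsub hσ)).continuousOn.continuousAt
        (isOpen_ball.mem_nhds hΦ))).tendsto.comp (hP.tendsto_loewnerIterate hζ (hsub hσ))
  exact tendsto_nhds_unique ((hP.tendsto_loewnerIterate hζ hτ).comp (tendsto_add_atTop_nat 1))
    ((hint.neg.cexp).const_mul ζ)

theorem hasDerivWithinAt_loewnerFlow {ζ : ℂ} (hζ : ζ ∈ ball (0 : ℂ) 1) {τ : ℝ}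
    (hτ : τ ∈ Icc a b) :
    HasDerivWithinAt (loewnerFlow P a ζ)
      (-loewnerFlow P a ζ τ * P (loewnerFlow P a ζ τ) τ) (Icc a b) τ := by
  have hΦ := hP.hasDerivWithinAt_mul_exp_neg_integral (hP.continuousOn_loewnerFlow hζ)
    ((hP.mapsTo_loewnerFlow hζ).mono_right (closedBall_subset_ball (mem_ball_zero_iff.mp hζ)))
    ζ hτ
  rw [← hP.loewnerFlow_eq_mul_exp hζ hτ] at hΦ
  exact hΦ.congr (fun σ hσ => hP.loewnerFlow_eq_mul_exp hζ hσ) (hP.loewnerFlow_eq_mul_exp hζ hτ)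

theorem injOn_loewnerFlow (hab : a ≤ b) : InjOn (loewnerFlow P a · b) (ball 0 1) := by
  intro ζ₁ h₁ ζ₂ h₂ heq
  set r := max ‖ζ₁‖ ‖ζ₂‖
  have hr : r < 1 := max_lt (mem_ball_zero_iff.mp h₁) (mem_ball_zero_iff.mp h₂)
  obtain ⟨K, hK⟩ := exists_lipschitzOnWith_closedBall (G := fun z τ => -z * P z τ)
    isCompact_Icc hr (continuous_fst.continuousOn.neg.mul hP.continuousOn)
    fun τ hτ => differentiableOn_id.neg.mul (hP.differentiableOn τ hτ)
  have hderiv : ∀ {ζ}, ζ ∈ ball (0 : ℂ) 1 → ∀ τ ∈ Ioc a b, HasDerivWithinAt (loewnerFlow P a ζ)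
      (-loewnerFlow P a ζ τ * P (loewnerFlow P a ζ τ) τ) (Iic τ) τ := fun hζ τ hτ =>
    (hP.hasDerivWithinAt_loewnerFlow hζ (Ioc_subset_Icc_self hτ)).mono_of_mem_nhdsWithin
      (Icc_mem_nhdsLE_of_mem hτ)
  have hmem : ∀ {ζ}, ζ ∈ ball (0 : ℂ) 1 → ‖ζ‖ ≤ r →
      ∀ τ ∈ Ioc a b, loewnerFlow P a ζ τ ∈ closedBall 0 r := fun hζ hζr τ hτ =>
    closedBall_subset_closedBall hζr (hP.mapsTo_loewnerFlow hζ (Ioc_subset_Icc_self hτ))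
  have := ODE_solution_unique_of_mem_Icc_left (fun τ hτ => hK τ (Ioc_subset_Icc_self hτ))
    (hP.continuousOn_loewnerFlow h₁) (hderiv h₁) (hmem h₁ (le_max_left _ _))
    (hP.continuousOn_loewnerFlow h₂) (hderiv h₂) (hmem h₂ (le_max_right _ _)) heq
    (left_mem_Icc.mpr hab)
  simpa only [loewnerFlow_self] using this

end IsHerglotzFamily

theorem lownerKufarev_subordination_chain_general
    (I : Set ℝ) (hI : I.OrdConnected)
    (U : Set ℂ) (hU : IsOpen U) (hUD : closedBall (0 : ℂ) 1 ⊆ U)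
    (f : ℂ → ℝ → ℂ)
    (hsmooth : ContDiffOn ℝ (⊤ : ℕ∞) (fun p : ℂ × ℝ => f p.1 p.2) (U ×ˢ I))
    (hanal : ∀ t ∈ I, DifferentiableOn ℂ (fun ζ => f ζ t) U)
    (q : ℝ → ℝ) (hq : ∀ t ∈ I, 0 ≤ q t)
    (V : Set ℂ) (hVD : closedBall (0 : ℂ) 1 ⊆ V)
    (P : ℂ → ℝ → ℂ)
    (hPanal : ∀ t ∈ I, DifferentiableOn ℂ (fun ζ => P ζ t) V)
    (hPjoint : ContinuousOn (fun p : ℂ × ℝ => P p.1 p.2) (V ×ˢ I))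
    (hPre : ∀ t ∈ I, ∀ ζ : ℂ, ‖ζ‖ = 1 →
      (P ζ t).re = q t / ‖deriv (fun z => f z t) ζ‖ ^ 2)
    (hLK : ∀ t ∈ I, ∀ ζ ∈ ball (0 : ℂ) 1,
      deriv (f ζ) t = ζ * deriv (fun z => f z t) ζ * P ζ t) :
    ∀ s ∈ I, ∀ t ∈ I, s ≤ t →
      ∃ φ : ℂ → ℂ, DifferentiableOn ℂ φ (ball (0 : ℂ) 1) ∧
        MapsTo φ (ball (0 : ℂ) 1) (ball (0 : ℂ) 1) ∧
        InjOn φ (ball (0 : ℂ) 1) ∧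
        ∀ ζ ∈ ball (0 : ℂ) 1, f ζ s = f (φ ζ) t := by
  intro s hs t ht hst
  have hsub : Icc s t ⊆ I := hI.out hs ht
  have hP : IsHerglotzFamily P (Icc s t) :=
    .of_re_nonneg_sphere hVD (hPjoint.mono (prod_mono subset_rfl hsub))
      (fun τ hτ => hPanal τ (hsub hτ)) fun τ hτ z hz => by
        rw [hPre τ (hsub hτ) z (mem_sphere_zero_iff_norm.mp hz)]
        exact div_nonneg (hq τ (hsub hτ)) (sq_nonneg _)
  have hflow : ∀ ζ ∈ ball (0 : ℂ) 1, MapsTo (loewnerFlow P s ζ) (Icc s t) (ball 0 1) :=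
    fun ζ hζ => (hP.mapsTo_loewnerFlow hζ).mono_right
      (closedBall_subset_ball (mem_ball_zero_iff.mp hζ))
  refine ⟨(loewnerFlow P s · t), hP.differentiableOn_loewnerFlow (right_mem_Icc.mpr hst),
    fun ζ hζ => hflow ζ hζ (right_mem_Icc.mpr hst), hP.injOn_loewnerFlow hst, fun ζ hζ => ?_⟩
  have key := eq_of_transport_equation hU (hsmooth.of_le (by simp)) hanal hst hsub
    ((hflow ζ hζ).mono_right (ball_subset_closedBall.trans hUD))
    (fun τ hτ => hP.hasDerivWithinAt_loewnerFlow hζ hτ) fun τ hτ => by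
      rw [hLK τ (hsub (Ioo_subset_Icc_self hτ)) _ (hflow ζ hζ (Ioo_subset_Icc_self hτ))]
      ring
  rwa [loewnerFlow_self] at key

/-- If a smooth normalized family `f(ζ,t)` with `∂_ζ f ≠ 0` on the unit circle
solves the Löwner–Kufarev equation `∂_t f = ζ ∂_ζ f · P(ζ,t)`, where `P(·,t)` is the Poisson
extension of `q(t)/|∂_ζ f|²` (assumed analytic in a neighborhood `V` of the closed unit disk and
jointly continuous on `V × I`), then `{f(·,t)}` is a subordination chain: for `s ≤ t` in `I`
there is an injective analytic self-map `φ` of `𝔻` with `f(ζ,s) = f(φ(ζ),t)` on `𝔻`. -/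
theorem lownerKufarev_subordination_chain
    (I : Set ℝ) (hI : I.OrdConnected)
    (U : Set ℂ) (hU : IsOpen U) (hUD : closedBall (0 : ℂ) 1 ⊆ U)
    (f : ℂ → ℝ → ℂ)
    (hsmooth : ContDiffOn ℝ (⊤ : ℕ∞) (fun p : ℂ × ℝ => f p.1 p.2) (U ×ˢ I))
    (hanal : ∀ t ∈ I, DifferentiableOn ℂ (fun ζ => f ζ t) U)
    (hnorm0 : ∀ t ∈ I, f 0 t = 0)
    (hnorm1 : ∀ t ∈ I, (deriv (fun ζ => f ζ t) 0).im = 0 ∧ 0 < (deriv (fun ζ => f ζ t) 0).re)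
    (hne : ∀ t ∈ I, ∀ ζ : ℂ, ‖ζ‖ = 1 → deriv (fun z => f z t) ζ ≠ 0)
    (q : ℝ → ℝ) (hq : ∀ t ∈ I, 0 ≤ q t)
    (V : Set ℂ) (hV : IsOpen V) (hVD : closedBall (0 : ℂ) 1 ⊆ V)
    (P : ℂ → ℝ → ℂ)
    (hPanal : ∀ t ∈ I, DifferentiableOn ℂ (fun ζ => P ζ t) V)
    (hPjoint : ContinuousOn (fun p : ℂ × ℝ => P p.1 p.2) (V ×ˢ I))
    (hPre : ∀ t ∈ I, ∀ ζ : ℂ, ‖ζ‖ = 1 →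
      (P ζ t).re = q t / ‖deriv (fun z => f z t) ζ‖ ^ 2)
    (hPim : ∀ t ∈ I, (P 0 t).im = 0)
    (hLK : ∀ t ∈ I, ∀ ζ ∈ ball (0 : ℂ) 1,
      deriv (f ζ) t = ζ * deriv (fun z => f z t) ζ * P ζ t) :
    ∀ s ∈ I, ∀ t ∈ I, s ≤ t →
      ∃ φ : ℂ → ℂ, DifferentiableOn ℂ φ (ball (0 : ℂ) 1) ∧
        MapsTo φ (ball (0 : ℂ) 1) (ball (0 : ℂ) 1) ∧
        InjOn φ (ball (0 : ℂ) 1) ∧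
        ∀ ζ ∈ ball (0 : ℂ) 1, f ζ s = f (φ ζ) t :=
  lownerKufarev_subordination_chain_general I hI U hU hUD f hsmooth hanal q hq V hVD P hPanal
    hPjoint hPre hLK
end
end

section
/- Fix real numbers b and t with t > 1, and let f(ζ) = b·ζ·(ζ − 2/t + 1/t³)/(ζ − t). Then the quadrature identity (1/π)·∫_𝔻 h(ζ)·|f'(ζ)|² dm(ζ) = b²·(2t² − 1)/t⁴ · h(0) holds for every function h analytic in a neighborhood of the closed unit disk. -/
open Complex Metric Set MeasureTheory
open scoped Real ComplexConjugate

/-!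
Write `w = 1/t`. Then `f' = b (1 - q)` with `q ζ = ((1 - w²) / (1 - w ζ))²`, so with the function
`u = h (1 - q)`, holomorphic near the closed disc, `h |f'|² = b² (u - (1 - w²)² u / (1 - w ζ̄)²)`.
The area mean value property and the reproducing property of the Bergman kernel,
`∫_𝔻 u(ζ) / (1 - w ζ̄)² dm = π u(w)`, turn the integral into `π b² (u(0) - (1 - w²)² u(w))`,
and `u(w) = 0` because `q(w) = 1`.

The reproducing property is proved in polar coordinates: on the circle `|ζ| = r` we have
`ζ̄ = r² / ζ`, so the angular integral is Cauchy's formula for `(ζ u)'` at `w r²`, and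
`∫₀¹ 2π r (ζ u)'(w r²) dr = π u(w)` by the fundamental theorem of calculus.
-/

theorem Complex.polarCoord_symm_eq_circleMap (r θ : ℝ) :
    Complex.polarCoord.symm (r, θ) = circleMap 0 r θ := by
  simp [circleMap, Complex.exp_mul_I, ← Complex.ofReal_cos, ← Complex.ofReal_sin]

theorem Complex.continuous_polarCoord_symm :
    Continuous fun p : ℝ × ℝ => Complex.polarCoord.symm p := by
  simp only [Complex.polarCoord_symm_apply]
  fun_prop

theorem setIntegral_ball_zero_eq_polarCoord {E : Type*} [NormedAddCommGroup E] [NormedSpace ℝ E]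
    (R : ℝ) (g : ℂ → E) :
    ∫ z in ball (0 : ℂ) R, g z
      = ∫ p in Ioo 0 R ×ˢ Ioo (-π) π, p.1 • g (Complex.polarCoord.symm p) := by
  have htarget : Complex.polarCoord.target ∩ Complex.polarCoord.symm ⁻¹' ball 0 R
      = Ioo 0 R ×ˢ Ioo (-π) π := by
    ext ⟨r, θ⟩
    simp only [Complex.polarCoord_target, mem_inter_iff, mem_prod, mem_Ioi, mem_Ioo,
      mem_preimage, mem_ball_zero_iff, Complex.norm_polarCoord_symm]
    constructor
    · rintro ⟨⟨hr, hθ⟩, hrR⟩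
      exact ⟨⟨hr, (abs_of_pos hr) ▸ hrR⟩, hθ⟩
    · rintro ⟨⟨hr, hrR⟩, hθ⟩
      exact ⟨⟨hr, hθ⟩, (abs_of_pos hr).symm ▸ hrR⟩
  rw [← integral_indicator measurableSet_ball, ← Complex.integral_comp_polarCoord_symm,
    ← htarget, ← setIntegral_indicator
      (Complex.continuous_polarCoord_symm.measurable measurableSet_ball)]
  congr 1
  ext p
  simp [indicator]

theorem setIntegral_Ioo_neg_pi_pi_circleMap {E : Type*} [NormedAddCommGroup E] [NormedSpace ℝ E]
    (g : ℂ → E) (c : ℂ) (r : ℝ) :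
    ∫ θ in Ioo (-π) π, g (circleMap c r θ) = ∫ θ in 0..2 * π, g (circleMap c r θ) := by
  have hper : Function.Periodic (fun θ => g (circleMap c r θ)) (2 * π) :=
    (periodic_circleMap c r).comp g
  rw [← integral_Ioc_eq_integral_Ioo, ← intervalIntegral.integral_of_le (by linarith [Real.pi_pos]),
    ← zero_add (2 * π), ← hper.intervalIntegral_add_eq (-π) 0]
  ring_nf

theorem one_sub_ne_zero_of_norm_lt_one {x : ℂ} (hx : ‖x‖ < 1) : 1 - x ≠ 0 :=
  sub_ne_zero.mpr (ne_of_apply_ne norm (by simpa using hx.ne'))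

theorem continuousOn_div_one_sub_mul_conj_sq {u : ℂ → ℂ} {R : ℝ}
    (hu : ContinuousOn u (closedBall 0 R)) {w : ℂ} (hw : ‖w‖ * R < 1) :
    ContinuousOn (fun z => u z / (1 - w * conj z) ^ 2) (closedBall 0 R) := by
  refine hu.div (by fun_prop) fun z hz => pow_ne_zero _ (one_sub_ne_zero_of_norm_lt_one ?_)
  rw [norm_mul, Complex.norm_conj]
  exact (mul_le_mul_of_nonneg_left (mem_closedBall_zero_iff.mp hz) (norm_nonneg w)).trans_lt hw

theorem integral_circleMap_div_one_sub_mul_conj_sq {U : Set ℂ} (hU : IsOpen U) {u : ℂ → ℂ}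
    (hu : DifferentiableOn ℂ u U) {r : ℝ} (hr : 0 < r) (hrU : closedBall 0 r ⊆ U) {w : ℂ}
    (hw : ‖w‖ * r < 1) :
    ∫ θ in 0..2 * π, u (circleMap 0 r θ) / (1 - w * conj (circleMap 0 r θ)) ^ 2
      = 2 * π * deriv (fun z => z * u z) (w * r ^ 2) := by
  have ha : w * r ^ 2 ∈ ball (0 : ℂ) r := by
    rw [mem_ball_zero_iff, norm_mul, norm_pow, Complex.norm_real, Real.norm_of_nonneg hr.le]
    nlinarith
  have hm : DifferentiableOn ℂ (fun z => z * u z) U := differentiableOn_id.mul hu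
  have hcauchy := two_pi_I_inv_smul_circleIntegral_sub_sq_inv_smul_of_differentiable hU hrU hm ha
  rw [inv_smul_eq_iff₀ (by simp [Real.pi_ne_zero]), circleIntegral] at hcauchy
  have hintegrand : ∀ θ : ℝ, deriv (circleMap 0 r) θ •
      ((circleMap 0 r θ - w * r ^ 2) ^ 2)⁻¹ • (circleMap 0 r θ * u (circleMap 0 r θ))
      = I * (u (circleMap 0 r θ) / (1 - w * conj (circleMap 0 r θ)) ^ 2) := by
    intro θ
    have hz : circleMap 0 r θ ≠ 0 := circleMap_ne_center hr.ne'
    have hconj : conj (circleMap 0 r θ) = r ^ 2 / circleMap 0 r θ := by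
      rw [eq_div_iff hz, conj_mul', norm_circleMap_zero, abs_of_pos hr]
    have hza : circleMap 0 r θ - w * r ^ 2 ≠ 0 := sub_ne_zero.mpr (circleMap_ne_mem_ball ha θ)
    rw [deriv_circleMap, hconj, smul_eq_mul, smul_eq_mul]
    generalize circleMap 0 r θ = z at hz hza ⊢
    field_simp
  simp_rw [hintegrand, intervalIntegral.integral_const_mul, smul_eq_mul] at hcauchy
  exact mul_left_cancel₀ I_ne_zero (hcauchy.trans (by ring))

theorem hasDerivAt_sq_mul_comp_sq {u : ℂ → ℂ} {w : ℂ} {r : ℝ}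
    (hu : DifferentiableAt ℂ u (w * r ^ 2)) :
    HasDerivAt (fun s : ℝ => π * s ^ 2 * u (w * s ^ 2))
      (r • (2 * π * deriv (fun z => z * u z) (w * r ^ 2))) r := by
  have hinner : HasDerivAt (fun z : ℂ => w * z ^ 2) (w * (2 * r)) (r : ℂ) := by
    simpa using (hasDerivAt_pow 2 (r : ℂ)).const_mul w
  have hm : HasDerivAt (fun z => z * u z) (1 * u (w * r ^ 2) + w * r ^ 2 * deriv u (w * r ^ 2))
      (w * r ^ 2) := (hasDerivAt_id' _).fun_mul hu.hasDerivAt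
  have hF : HasDerivAt (fun z : ℂ => π * z ^ 2 * u (w * z ^ 2))
      (π * (2 * r) * u (w * r ^ 2) + π * r ^ 2 * (deriv u (w * r ^ 2) * (w * (2 * r)))) r := by
    simpa using ((hasDerivAt_pow 2 (r : ℂ)).const_mul (π : ℂ)).fun_mul
      (hu.hasDerivAt.comp (r : ℂ) hinner)
  convert hF.comp_ofReal using 1
  rw [hm.deriv, Complex.real_smul]
  ring

/-- The reproducing property of the Bergman kernel of the disc of radius `R`. -/
theorem setIntegral_ball_div_one_sub_mul_conj_sq {U : Set ℂ} (hU : IsOpen U) {u : ℂ → ℂ}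
    (hu : DifferentiableOn ℂ u U) {R : ℝ} (hR : 0 ≤ R) (hRU : closedBall 0 R ⊆ U) {w : ℂ}
    (hw : ‖w‖ * R < 1) :
    ∫ z in ball (0 : ℂ) R, u z / (1 - w * conj z) ^ 2 = π * R ^ 2 * u (w * R ^ 2) := by
  set G : ℂ → ℂ := fun z => u z / (1 - w * conj z) ^ 2
  have hG : ContinuousOn G (closedBall 0 R) :=
    continuousOn_div_one_sub_mul_conj_sq (hu.continuousOn.mono hRU) hw
  have hmaps : MapsTo (fun p : ℝ × ℝ => Complex.polarCoord.symm p)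
      (Icc 0 R ×ˢ Icc (-π) π) (closedBall 0 R) := by
    intro p hp
    rw [mem_closedBall_zero_iff, Complex.norm_polarCoord_symm, abs_of_nonneg hp.1.1]
    exact hp.1.2
  have hint : IntegrableOn (fun p : ℝ × ℝ => p.1 • G (Complex.polarCoord.symm p))
      (Ioo 0 R ×ˢ Ioo (-π) π) :=
    ((continuous_fst.continuousOn.smul (hG.comp Complex.continuous_polarCoord_symm.continuousOn
      hmaps)).integrableOn_compact (isCompact_Icc.prod isCompact_Icc)).mono_set
      (prod_mono Ioo_subset_Icc_self Ioo_subset_Icc_self)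
  have hcircle : ∀ r ∈ Ioo 0 R, ∫ θ in Ioo (-π) π, r • G (Complex.polarCoord.symm (r, θ))
      = r • (2 * π * deriv (fun z => z * u z) (w * r ^ 2)) := by
    intro r hr
    have hwr : ‖w‖ * r < 1 := (mul_le_mul_of_nonneg_left hr.2.le (norm_nonneg w)).trans_lt hw
    simp only [Complex.polarCoord_symm_eq_circleMap]
    rw [integral_smul, setIntegral_Ioo_neg_pi_pi_circleMap G,
      integral_circleMap_div_one_sub_mul_conj_sq hU hu hr.1
        ((closedBall_subset_closedBall hr.2.le).trans hRU) hwr]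
  have hmem : MapsTo (fun r : ℝ => w * (r : ℂ) ^ 2) (uIcc 0 R) U := by
    intro r hr
    rw [uIcc_of_le hR] at hr
    apply hRU
    rw [mem_closedBall_zero_iff, norm_mul, norm_pow, Complex.norm_real, Real.norm_of_nonneg hr.1]
    nlinarith [mul_le_mul_of_nonneg_left hr.2 (norm_nonneg w), hr.1, hr.2]
  have hderiv : ∀ r ∈ uIcc 0 R, HasDerivAt (fun s : ℝ => π * s ^ 2 * u (w * s ^ 2))
      (r • (2 * π * deriv (fun z => z * u z) (w * r ^ 2))) r := fun r hr =>
    hasDerivAt_sq_mul_comp_sq (hu.differentiableAt (hU.mem_nhds (hmem hr)))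
  have hcont : ContinuousOn (fun r : ℝ => r • (2 * π * deriv (fun z => z * u z) (w * r ^ 2)))
      (uIcc 0 R) := by
    refine continuousOn_id.smul (continuousOn_const.mul ?_)
    exact ((differentiableOn_id.mul hu).deriv hU).continuousOn.comp (by fun_prop) hmem
  rw [setIntegral_ball_zero_eq_polarCoord, Measure.volume_eq_prod, setIntegral_prod _ hint,
    setIntegral_congr_fun measurableSet_Ioo hcircle, ← integral_Ioc_eq_integral_Ioo,
    ← intervalIntegral.integral_of_le hR,
    intervalIntegral.integral_eq_sub_of_hasDerivAt hderiv (hcont.intervalIntegrable)]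
  simp

theorem setIntegral_ball_zero_eq_pi_mul_sq_mul {U : Set ℂ} (hU : IsOpen U) {u : ℂ → ℂ}
    (hu : DifferentiableOn ℂ u U) {R : ℝ} (hR : 0 ≤ R) (hRU : closedBall 0 R ⊆ U) :
    ∫ z in ball (0 : ℂ) R, u z = π * R ^ 2 * u 0 := by
  simpa using setIntegral_ball_div_one_sub_mul_conj_sq hU hu hR hRU (w := 0) (by simp)

noncomputable def sakaiMap (b t : ℂ) : ℂ → ℂ := fun ζ => b * ζ * (ζ - 2 / t + 1 / t ^ 3) / (ζ - t)

noncomputable def sakaiDeriv (w z : ℂ) : ℂ := 1 - ((1 - w ^ 2) / (1 - w * z)) ^ 2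

theorem hasDerivAt_sakaiMap (b : ℂ) {t z : ℂ} (ht : t ≠ 0) (hz : z ≠ t) :
    HasDerivAt (sakaiMap b t) (b * sakaiDeriv t⁻¹ z) z := by
  have hzt : z - t ≠ 0 := sub_ne_zero.mpr hz
  have hnum : HasDerivAt (fun ζ => b * ζ * (ζ - 2 / t + 1 / t ^ 3))
      (b * 1 * (z - 2 / t + 1 / t ^ 3) + b * z * 1) z :=
    ((hasDerivAt_id' z).const_mul b).fun_mul (((hasDerivAt_id' z).sub_const _).add_const _)
  refine (hnum.fun_div ((hasDerivAt_id' z).sub_const t) hzt).congr_deriv ?_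
  have htz : t - z ≠ 0 := sub_ne_zero.mpr hz.symm
  rw [sakaiDeriv, show 1 - t⁻¹ * z = (t - z) / t by field_simp]
  field_simp
  ring

theorem differentiableOn_sakaiDeriv (w : ℂ) :
    DifferentiableOn ℂ (sakaiDeriv w) {z | 1 - w * z ≠ 0} :=
  (differentiableOn_const _).sub (((differentiableOn_const _).div (by fun_prop)
    fun _ hz => hz).pow 2)

theorem sakaiDeriv_self {w : ℂ} (hw : 1 - w ^ 2 ≠ 0) : sakaiDeriv w w = 0 := by
  rw [sakaiDeriv, ← sq, div_self hw, one_pow, sub_self]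

theorem conj_sakaiDeriv (w : ℝ) (z : ℂ) : conj (sakaiDeriv w z) = sakaiDeriv w (conj z) := by
  simp [sakaiDeriv]

theorem setIntegral_ball_mul_sq_norm_sakaiDeriv {w : ℝ} (hw : |w| < 1) {U : Set ℂ}
    (hU : IsOpen U) (hU1 : closedBall 0 1 ⊆ U) {h : ℂ → ℂ} (hh : DifferentiableOn ℂ h U) :
    ∫ z in ball (0 : ℂ) 1, h z * ((‖sakaiDeriv w z‖ ^ 2 : ℝ) : ℂ)
      = π * (1 - (1 - w ^ 2) ^ 2) * h 0 := by
  set W := U ∩ {z | 1 - w * z ≠ 0}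
  have hW : IsOpen W := hU.inter (isOpen_ne_fun (by fun_prop) (by fun_prop))
  have hW1 : closedBall 0 1 ⊆ W := by
    refine subset_inter hU1 fun z hz => one_sub_ne_zero_of_norm_lt_one ?_
    rw [norm_mul, norm_real, Real.norm_eq_abs]
    exact (mul_le_of_le_one_right (abs_nonneg w) (mem_closedBall_zero_iff.mp hz)).trans_lt hw
  have hw1 : ‖(w : ℂ)‖ * 1 < 1 := by simpa using hw
  set u : ℂ → ℂ := fun z => h z * sakaiDeriv w z
  have hu : DifferentiableOn ℂ u W :=
    (hh.mono inter_subset_left).mul ((differentiableOn_sakaiDeriv w).mono inter_subset_right)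
  have hucont : ContinuousOn u (closedBall 0 1) := hu.continuousOn.mono hW1
  have hintegrand : ∀ z, h z * ((‖sakaiDeriv w z‖ ^ 2 : ℝ) : ℂ)
      = u z - (1 - w ^ 2) ^ 2 * (u z / (1 - w * conj z) ^ 2) := by
    intro z
    rw [ofReal_pow, ← mul_conj', conj_sakaiDeriv]
    simp only [u, sakaiDeriv, div_pow]
    ring
  have hw2 : 1 - (w : ℂ) ^ 2 ≠ 0 := by
    exact_mod_cast (sub_pos.mpr ((sq_lt_one_iff_abs_lt_one w).mpr hw)).ne'
  simp_rw [hintegrand]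
  rw [integral_sub, integral_const_mul,
    setIntegral_ball_zero_eq_pi_mul_sq_mul hW hu zero_le_one hW1,
    setIntegral_ball_div_one_sub_mul_conj_sq hW hu zero_le_one hW1 hw1]
  · simp only [u, ofReal_one, one_pow, mul_one, sakaiDeriv_self hw2, mul_zero, sub_zero]
    simp only [sakaiDeriv, mul_zero, sub_zero, div_one]
    ring
  · exact (hucont.integrableOn_compact (isCompact_closedBall 0 1)).mono_set ball_subset_closedBall
  · refine Integrable.const_mul (IntegrableOn.mono_set ?_ ball_subset_closedBall) _
    exact (continuousOn_div_one_sub_mul_conj_sq hucont hw1).integrableOn_compact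
      (isCompact_closedBall 0 1)

/-- For real `b` and `t > 1`, the map
`f(ζ) = b ζ (ζ − 2/t + 1/t³)/(ζ − t)` satisfies the quadrature identity
`(1/π) ∫_𝔻 h |f'|² dm = b² (2t² − 1)/t⁴ · h(0)` for every `h` analytic in a neighborhood of
the closed unit disk. -/
theorem quadrature_identity_sakai_example
    (b t : ℝ) (ht : 1 < t)
    (f : ℂ → ℂ)
    (hf : f = fun ζ : ℂ =>
      (b : ℂ) * ζ * (ζ - 2 / (t : ℂ) + 1 / (t : ℂ) ^ 3) / (ζ - (t : ℂ))) :
    ∀ (V : Set ℂ), IsOpen V → closedBall (0 : ℂ) 1 ⊆ V →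
      ∀ h : ℂ → ℂ, DifferentiableOn ℂ h V →
        ((1 / π : ℝ) : ℂ) *
            (∫ ζ in ball (0 : ℂ) 1, h ζ * ((‖deriv f ζ‖ ^ 2 : ℝ) : ℂ)) =
          ((b ^ 2 * (2 * t ^ 2 - 1) / t ^ 4 : ℝ) : ℂ) * h 0 := by
  intro V hV hV1 h hh
  have ht0 : 0 < t := zero_lt_one.trans ht
  have htC : (t : ℂ) ≠ 0 := ofReal_ne_zero.mpr ht0.ne'
  have hintegrand : EqOn (fun ζ => h ζ * ((‖deriv f ζ‖ ^ 2 : ℝ) : ℂ))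
      (fun ζ => b ^ 2 * (h ζ * ((‖sakaiDeriv (t⁻¹ : ℝ) ζ‖ ^ 2 : ℝ) : ℂ))) (ball 0 1) := by
    intro ζ hζ
    have hζt : ζ ≠ t := fun h1 => by simp [h1, abs_of_pos ht0, ht.le.not_gt] at hζ
    have hderiv : deriv f ζ = b * sakaiDeriv (t : ℂ)⁻¹ ζ :=
      hf ▸ (hasDerivAt_sakaiMap b htC hζt).deriv
    simp only [hderiv]
    rw [norm_mul, norm_real, Real.norm_eq_abs, mul_pow, sq_abs]
    push_cast
    ring
  rw [setIntegral_congr_fun measurableSet_ball hintegrand, integral_const_mul,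
    setIntegral_ball_mul_sq_norm_sakaiDeriv (by rwa [abs_inv, abs_of_pos ht0, inv_lt_one₀ ht0])
      hV hV1 hh]
  push_cast
  field_simp
  ring
end

section
/- Fix a real number a, and for t > 1 and ζ ≠ t let f(ζ,t) = a·t³·ζ·(ζ − 2/t + 1/t³)/(ζ − t). Then the derivative factors as ∂_ζf(ζ,t) = a·t³·(ζ − 1/t)·(ζ − 2t + 1/t)/(ζ − t)²; in particular ∂_ζf(1/t, t) = 0, and the corresponding critical value is independent of t: f(1/t, t) = a for all t > 1. -/
open Complex

noncomputable section

theorem hasDerivAt_mul_mul_add_div_sub {𝕜 : Type*} [NontriviallyNormedField 𝕜]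
    (k b c z : 𝕜) (hz : z ≠ c) :
    HasDerivAt (fun ζ => k * ζ * (ζ + b) / (ζ - c))
      (k * (z ^ 2 - 2 * c * z - b * c) / (z - c) ^ 2) z := by
  have hnum : HasDerivAt (fun ζ => k * ζ * (ζ + b)) (k * (2 * z + b)) z :=
    (((hasDerivAt_id' z).const_mul k).fun_mul ((hasDerivAt_id' z).add_const b)).congr_deriv
      (by ring)
  exact (hnum.fun_div ((hasDerivAt_id' z).sub_const c) (sub_ne_zero.mpr hz)).congr_deriv
    (by ring)

theorem one_div_ne_self_of_one_lt {t : ℝ} (ht : 1 < t) : (1 / t : ℂ) ≠ t := by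
  have hlt : 1 / t < t := (div_lt_one (by linarith)).mpr ht |>.trans ht
  exact_mod_cast hlt.ne

/-- For real `a`, `t > 1` and
`f(ζ) = a t³ ζ (ζ − 2/t + 1/t³)/(ζ − t)`, the derivative factors as
`f'(ζ) = a t³ (ζ − 1/t)(ζ − 2t + 1/t)/(ζ − t)²`; in particular `f'(1/t) = 0` and the critical
value is the fixed point `f(1/t) = a`. -/
theorem sakai_example_critical_point
    (a t : ℝ) (ht : 1 < t)
    (f : ℂ → ℂ)
    (hf : f = fun ζ : ℂ =>
      (a : ℂ) * (t : ℂ) ^ 3 * ζ * (ζ - 2 / (t : ℂ) + 1 / (t : ℂ) ^ 3) / (ζ - (t : ℂ))) :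
    (∀ ζ : ℂ, ζ ≠ (t : ℂ) →
      deriv f ζ =
        (a : ℂ) * (t : ℂ) ^ 3 * (ζ - 1 / (t : ℂ)) * (ζ - 2 * (t : ℂ) + 1 / (t : ℂ)) /
          (ζ - (t : ℂ)) ^ 2) ∧
    deriv f (1 / (t : ℂ)) = 0 ∧
    f (1 / (t : ℂ)) = (a : ℂ) := by
  have ht0 : (t : ℂ) ≠ 0 := by exact_mod_cast (zero_lt_one.trans ht).ne'
  have hinv := one_div_ne_self_of_one_lt ht
  have hderiv : ∀ ζ : ℂ, ζ ≠ (t : ℂ) →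
      deriv f ζ =
        (a : ℂ) * (t : ℂ) ^ 3 * (ζ - 1 / (t : ℂ)) * (ζ - 2 * (t : ℂ) + 1 / (t : ℂ)) /
          (ζ - (t : ℂ)) ^ 2 := by
    intro ζ hζ
    have hfb : f = fun ζ => (a * t ^ 3 : ℂ) * ζ * (ζ + (-2 / t + 1 / t ^ 3)) / (ζ - t) := by
      rw [hf]; funext ζ; ring
    rw [hfb, (hasDerivAt_mul_mul_add_div_sub _ _ _ _ hζ).deriv]
    -- the numerator `ζ² - 2tζ + 2 - 1/t²` has the roots `1/t` and `2t - 1/t`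
    field_simp
    ring
  refine ⟨hderiv, by rw [hderiv _ hinv]; simp, ?_⟩
  have hden : (1 / t - t : ℂ) ≠ 0 := sub_ne_zero.mpr hinv
  rw [hf, div_eq_iff hden]
  field_simp
  ring
end
end

section
/- For t ≥ 0 and ζ ∈ ℂ let f(ζ,t) = e^t·ζ − (1/2)·e^{−2t}·ζ². Then f solves the Polubarinova–Galin equation with source strength q(t) = e^{2t} − e^{−4t}: for every t ≥ 0 and every ζ with |ζ| = 1, Re[∂_tf(ζ,t)·conj(ζ·∂_ζf(ζ,t))] = e^{2t} − e^{−4t}. -/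
/-!
Write `f(ζ,t) = a(t) ζ + b(t) ζ²` with real coefficients `a = e^t`, `b = −½ e^{−2t}`.
On the unit circle `ζ ζ̄ = 1`, so `Re[∂_t f · conj(ζ ∂_ζ f)] = a a' + 2 b b' + (a b' + 2 a' b) Re ζ`.
For the cardioid flow the coefficient `a b' + 2 a' b = e^{−t} − e^{−t}` of `Re ζ` vanishes,
leaving `a a' + 2 b b' = e^{2t} − e^{−4t}`.
-/

open Complex

theorem hasDerivAt_ofReal_mul_add_ofReal_mul_sq {a b : ℝ → ℝ} {a' b' t : ℝ}
    (ha : HasDerivAt a a' t) (hb : HasDerivAt b b' t) (ζ : ℂ) :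
    HasDerivAt (fun s : ℝ => (a s : ℂ) * ζ + (b s : ℂ) * ζ ^ 2) (a' * ζ + b' * ζ ^ 2) t :=
  (ha.ofReal_comp.mul_const ζ).add (hb.ofReal_comp.mul_const _)

theorem hasDerivAt_mul_add_mul_sq (a b z : ℂ) :
    HasDerivAt (fun w : ℂ => a * w + b * w ^ 2) (a + 2 * b * z) z := by
  refine (((hasDerivAt_id' z).const_mul a).add ((hasDerivAt_pow 2 z).const_mul b)).congr_deriv ?_
  norm_num
  ring

theorem re_mul_conj_mul_of_norm_eq_one {ζ : ℂ} (hζ : ‖ζ‖ = 1) (a b c d : ℝ) :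
    (((c : ℂ) * ζ + d * ζ ^ 2) * (starRingEnd ℂ) (ζ * (a + 2 * b * ζ))).re =
      a * c + 2 * b * d + (a * d + 2 * b * c) * ζ.re := by
  have hunit : ζ * (starRingEnd ℂ) ζ = 1 := by
    rw [mul_conj, normSq_eq_norm_sq, hζ]
    norm_num
  have hcollapse : ((c : ℂ) * ζ + d * ζ ^ 2) * (starRingEnd ℂ) (ζ * (a + 2 * b * ζ)) =
      (a * c + 2 * b * d : ℝ) + a * d * ζ + 2 * b * c * (starRingEnd ℂ) ζ := by
    simp only [map_mul, map_add, map_ofNat, conj_ofReal]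
    push_cast
    linear_combination ((c + d * ζ) * (a + 2 * b * (starRingEnd ℂ) ζ) + 2 * b * d) * hunit
  rw [hcollapse]
  simp only [mul_re, add_re, mul_im, ofReal_re, ofReal_im, conj_re, conj_im, re_ofNat, im_ofNat]
  ring

/-- The univalent Hele-Shaw evolution of the cardioid,
`f(ζ,t) = e^t ζ − ½ e^{−2t} ζ²`, solves the Polubarinova–Galin equation with source strength
`q(t) = e^{2t} − e^{−4t}`: for `t ≥ 0` and `|ζ| = 1`,
`Re[∂_t f(ζ,t) · conj(ζ ∂_ζ f(ζ,t))] = e^{2t} − e^{−4t}`. -/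
theorem cardioid_univalent_solution
    (f : ℂ → ℝ → ℂ)
    (hf : f = fun (ζ : ℂ) (t : ℝ) =>
      (Real.exp t : ℂ) * ζ - (1 / 2 : ℂ) * (Real.exp (-2 * t) : ℂ) * ζ ^ 2) :
    ∀ t : ℝ, 0 ≤ t → ∀ ζ : ℂ, ‖ζ‖ = 1 →
      (deriv (f ζ) t *
          (starRingEnd ℂ) (ζ * deriv (fun z => f z t) ζ)).re =
        Real.exp (2 * t) - Real.exp (-4 * t) := by
  subst hf
  intro t _ ζ hζ
  set b : ℝ → ℝ := fun s => -(1 / 2) * Real.exp (-2 * s)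
  have hb : HasDerivAt b (Real.exp (-2 * t)) t := by
    refine ((((hasDerivAt_id' t).const_mul (-2)).exp).const_mul (-(1 / 2) : ℝ)).congr_deriv ?_
    ring
  have hquad (s : ℝ) (z : ℂ) :
      (Real.exp s : ℂ) * z - (1 / 2 : ℂ) * (Real.exp (-2 * s) : ℂ) * z ^ 2 =
        (Real.exp s : ℂ) * z + (b s : ℂ) * z ^ 2 := by
    simp only [b]
    push_cast
    ring
  have hft := hasDerivAt_ofReal_mul_add_ofReal_mul_sq (Real.hasDerivAt_exp t) hb ζ
  have hfz := hasDerivAt_mul_add_mul_sq (Real.exp t) (b t) ζ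
  simp only [hquad, hft.deriv, hfz.deriv, re_mul_conj_mul_of_norm_eq_one hζ]
  have hexp_two_mul (x : ℝ) : Real.exp (2 * x) = Real.exp x * Real.exp x := by
    rw [← Real.exp_add, two_mul]
  rw [show -4 * t = 2 * (-2 * t) by ring, hexp_two_mul, hexp_two_mul]
  simp only [b]
  ring
end

section
/- For t ≥ 0 and ζ ∈ ℂ let f(ζ,t) = e^{−t}·ζ − (1/2)·e^{2t}·ζ². Then f solves the Polubarinova–Galin equation with source strength q(t) = e^{4t} − e^{−2t}: for every t ≥ 0 and every ζ with |ζ| = 1, Re[∂_tf(ζ,t)·conj(ζ·∂_ζf(ζ,t))] = e^{4t} − e^{−2t}. -/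
/-
For a quadratic family `f(ζ,t) = a(t) ζ + b(t) ζ²` with real coefficients, on the unit circle
`ζ ζ̄ = 1` collapses `Re[∂_t f · conj(ζ ∂_ζ f)]` to `a a' + 2 b b' + (2 a' b + a b') Re ζ`.
For `a = e^{-t}`, `b = -e^{2t}/2` the coefficient of `Re ζ` is `e^t - e^t = 0`, leaving
`a a' + 2 b b' = e^{4t} - e^{-2t}`.
-/

open Complex

noncomputable section

theorem re_mul_conj_quadratic_of_norm_eq_one (a a' b b' : ℝ) {ζ : ℂ} (hζ : ‖ζ‖ = 1) :
    ((a' * ζ + b' * ζ ^ 2) * starRingEnd ℂ (ζ * (a + 2 * b * ζ))).re =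
      a * a' + 2 * b * b' + (2 * a' * b + a * b') * ζ.re := by
  have hconj : ζ * starRingEnd ℂ ζ = 1 := by
    rw [mul_conj, normSq_eq_norm_sq, hζ]; norm_num
  have hexpand : (a' * ζ + b' * ζ ^ 2) * starRingEnd ℂ (ζ * (a + 2 * b * ζ)) =
      ((a * a' + 2 * b * b' : ℝ) : ℂ) + ((2 * a' * b : ℝ) : ℂ) * starRingEnd ℂ ζ
        + ((a * b' : ℝ) : ℂ) * ζ := by
    simp only [map_mul, map_add, map_ofNat, conj_ofReal]
    push_cast
    linear_combination (a * a' + 2 * a' * b * starRingEnd ℂ ζ + a * b' * ζ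
      + 2 * b * b' * (ζ * starRingEnd ℂ ζ + 1)) * hconj
  rw [hexpand]
  simp only [add_re, re_ofReal_mul, ofReal_re, conj_re]
  ring

theorem hasDerivAt_quadratic_time {a b : ℝ → ℝ} {a' b' t : ℝ} (ha : HasDerivAt a a' t)
    (hb : HasDerivAt b b' t) (ζ : ℂ) :
    HasDerivAt (fun t : ℝ => (a t : ℂ) * ζ + (b t : ℂ) * ζ ^ 2) (a' * ζ + b' * ζ ^ 2) t :=
  (ha.ofReal_comp.mul_const ζ).add (hb.ofReal_comp.mul_const (ζ ^ 2))

theorem hasDerivAt_quadratic_space (a b ζ : ℂ) :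
    HasDerivAt (fun z : ℂ => a * z + b * z ^ 2) (a + 2 * b * ζ) ζ := by
  refine (((hasDerivAt_id ζ).const_mul a).add ((hasDerivAt_pow 2 ζ).const_mul b)).congr_deriv ?_
  simp only [Nat.cast_ofNat]
  ring

theorem re_deriv_mul_conj_quadratic {a b : ℝ → ℝ} {a' b' t : ℝ} (ha : HasDerivAt a a' t)
    (hb : HasDerivAt b b' t) {ζ : ℂ} (hζ : ‖ζ‖ = 1) :
    (deriv (fun t : ℝ => (a t : ℂ) * ζ + (b t : ℂ) * ζ ^ 2) t *
        starRingEnd ℂ (ζ * deriv (fun z : ℂ => (a t : ℂ) * z + (b t : ℂ) * z ^ 2) ζ)).re =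
      a t * a' + 2 * b t * b' + (2 * a' * b t + a t * b') * ζ.re := by
  rw [(hasDerivAt_quadratic_time ha hb ζ).deriv, (hasDerivAt_quadratic_space _ _ ζ).deriv]
  exact re_mul_conj_quadratic_of_norm_eq_one _ _ _ _ hζ

theorem hasDerivAt_exp_const_mul (c t : ℝ) :
    HasDerivAt (fun t : ℝ => Real.exp (c * t)) (c * Real.exp (c * t)) t := by
  simpa [mul_comm] using ((hasDerivAt_id t).const_mul c).exp

/-- The non-locally-univalent evolution of the cardioid,
`f(ζ,t) = e^{−t} ζ − ½ e^{2t} ζ²`, solves the Polubarinova–Galin equation with source strength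
`q(t) = e^{4t} − e^{−2t}`: for `t ≥ 0` and `|ζ| = 1`,
`Re[∂_t f(ζ,t) · conj(ζ ∂_ζ f(ζ,t))] = e^{4t} − e^{−2t}`. -/
theorem cardioid_nonunivalent_solution
    (f : ℂ → ℝ → ℂ)
    (hf : f = fun (ζ : ℂ) (t : ℝ) =>
      (Real.exp (-t) : ℂ) * ζ - (1 / 2 : ℂ) * (Real.exp (2 * t) : ℂ) * ζ ^ 2) :
    ∀ t : ℝ, 0 ≤ t → ∀ ζ : ℂ, ‖ζ‖ = 1 →
      (deriv (f ζ) t *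
          (starRingEnd ℂ) (ζ * deriv (fun z => f z t) ζ)).re =
        Real.exp (4 * t) - Real.exp (-2 * t) := by
  intro t _ ζ hζ
  have ha : HasDerivAt (fun t => Real.exp (-t)) (-Real.exp (-t)) t := by
    simpa using hasDerivAt_exp_const_mul (-1) t
  have hb : HasDerivAt (fun t => -(1 / 2) * Real.exp (2 * t)) (-Real.exp (2 * t)) t :=
    ((hasDerivAt_exp_const_mul 2 t).const_mul (-(1 / 2) : ℝ)).congr_deriv (by ring)
  have hf_quadratic : f = fun ζ t =>
      (Real.exp (-t) : ℂ) * ζ + ((-(1 / 2) * Real.exp (2 * t) : ℝ) : ℂ) * ζ ^ 2 := by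
    rw [hf]; ext ζ t; push_cast; ring
  rw [hf_quadratic, re_deriv_mul_conj_quadratic ha hb hζ]
  rw [show (4 : ℝ) * t = 2 * t + 2 * t by ring, show -2 * t = -t + -t by ring, Real.exp_add,
    Real.exp_add]
  ring
end
end

section
/- For every real number b₁ ≥ 1, define ζ₁ = √((1/2)·(1 + 2b₁ − 1/b₁²)), b₂ = −(ζ₁/4)·(1 + 2b₁ + 3/b₁²), b₃ = (2b₁³ + b₁² − 1)/(4b₁⁴), and Q = (1/(16b₁⁶))·(4b₁⁸ + 2b₁⁷ − 12b₁⁶ + b₁⁴ + 6b₁³ + 2b₁² − 3). Then the following four equations hold: (1) b₁·ζ₁⁴ + 2b₂·ζ₁³ − (b₂ − 3b₃·ζ₁)·ζ₁ − 2b₃ = 0; (2) b₁·ζ₁² + b₂·ζ₁ + b₃ + (1/2)·ζ₁²·(1 − ζ₁²) = 0; (3) b₁²·b₃ − (1/2)·ζ₁² = 0; (4) b₁·b₂·ζ₁ + 2b₂·b₃·ζ₁ + b₁·b₃·(ζ₁² + 2) + (3/2 + 2Q)·ζ₁² = 0. -/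
/-!
Every equation is even in `ζ₁`, since its odd powers only occur multiplied by `b₂ ∈ ζ₁ ℚ(b₁)`; for
`b₁ ≥ 1` the definition of `ζ₁` says exactly `2 b₁² ζ₁² = 2 b₁³ + b₁² - 1`. After clearing
denominators each equation is a polynomial multiple of this relation.
-/

noncomputable section

namespace Cardioid

def b₂ (b₁ ζ₁ : ℝ) : ℝ := -(ζ₁ / 4) * (1 + 2 * b₁ + 3 / b₁ ^ 2)

def b₃ (b₁ : ℝ) : ℝ := (2 * b₁ ^ 3 + b₁ ^ 2 - 1) / (4 * b₁ ^ 4)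

def Q (b₁ : ℝ) : ℝ := (1 / (16 * b₁ ^ 6)) *
  (4 * b₁ ^ 8 + 2 * b₁ ^ 7 - 12 * b₁ ^ 6 + b₁ ^ 4 + 6 * b₁ ^ 3 + 2 * b₁ ^ 2 - 3)

lemma two_mul_sq_mul_sq_sqrt {b₁ : ℝ} (hb₁ : 1 ≤ b₁) :
    2 * b₁ ^ 2 * Real.sqrt ((1 / 2) * (1 + 2 * b₁ - 1 / b₁ ^ 2)) ^ 2 =
      2 * b₁ ^ 3 + b₁ ^ 2 - 1 := by
  have hb₁_pos : 0 < b₁ := by linarith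
  have h_inv_le : 1 / b₁ ^ 2 ≤ 1 := by
    rw [div_le_one (by positivity)]
    nlinarith
  rw [Real.sq_sqrt (by linarith)]
  field_simp
  ring

section

variable {b₁ ζ₁ : ℝ} (hb₁ : b₁ ≠ 0) (hζ₁ : 2 * b₁ ^ 2 * ζ₁ ^ 2 = 2 * b₁ ^ 3 + b₁ ^ 2 - 1)
include hb₁ hζ₁

lemma critical_point_eq :
    b₁ * ζ₁ ^ 4 + 2 * b₂ b₁ ζ₁ * ζ₁ ^ 3 - (b₂ b₁ ζ₁ - 3 * b₃ b₁ * ζ₁) * ζ₁ - 2 * b₃ b₁ = 0 := by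
  unfold b₂ b₃
  field_simp
  linear_combination (-(b₁ ^ 2 + 3) * ζ₁ ^ 2 + 2) * hζ₁

lemma fixed_point_eq :
    b₁ * ζ₁ ^ 2 + b₂ b₁ ζ₁ * ζ₁ + b₃ b₁ + (1 / 2) * ζ₁ ^ 2 * (1 - ζ₁ ^ 2) = 0 := by
  unfold b₂ b₃
  field_simp
  linear_combination (-2 * b₁ ^ 2 * ζ₁ ^ 2 - 2) * hζ₁

lemma first_moment_eq : b₁ ^ 2 * b₃ b₁ - (1 / 2) * ζ₁ ^ 2 = 0 := by
  unfold b₃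
  field_simp
  linear_combination (-2) * hζ₁

lemma zeroth_moment_eq :
    b₁ * b₂ b₁ ζ₁ * ζ₁ + 2 * b₂ b₁ ζ₁ * b₃ b₁ * ζ₁ + b₁ * b₃ b₁ * (ζ₁ ^ 2 + 2) +
      (3 / 2 + 2 * Q b₁) * ζ₁ ^ 2 = 0 := by
  unfold b₂ b₃ Q
  field_simp
  linear_combination (-256 * b₁ ^ 3) * hζ₁

end

end Cardioid

end

/-- For every real `b₁ ≥ 1`, with
`ζ₁ = √(½(1 + 2b₁ − 1/b₁²))`, `b₂ = −(ζ₁/4)(1 + 2b₁ + 3/b₁²)`,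
`b₃ = (2b₁³ + b₁² − 1)/(4b₁⁴)` and
`Q = (1/(16b₁⁶))(4b₁⁸ + 2b₁⁷ − 12b₁⁶ + b₁⁴ + 6b₁³ + 2b₁² − 3)`, the four structural equations
of the Löwner–Kufarev evolution of the cardioid hold. -/
theorem cardioid_riemann_surface_parameters
    (b₁ : ℝ) (hb₁ : 1 ≤ b₁)
    (ζ₁ b₂ b₃ Q : ℝ)
    (hζ₁ : ζ₁ = Real.sqrt ((1 / 2) * (1 + 2 * b₁ - 1 / b₁ ^ 2)))
    (hb₂ : b₂ = -(ζ₁ / 4) * (1 + 2 * b₁ + 3 / b₁ ^ 2))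
    (hb₃ : b₃ = (2 * b₁ ^ 3 + b₁ ^ 2 - 1) / (4 * b₁ ^ 4))
    (hQ : Q = (1 / (16 * b₁ ^ 6)) *
      (4 * b₁ ^ 8 + 2 * b₁ ^ 7 - 12 * b₁ ^ 6 + b₁ ^ 4 + 6 * b₁ ^ 3 + 2 * b₁ ^ 2 - 3)) :
    b₁ * ζ₁ ^ 4 + 2 * b₂ * ζ₁ ^ 3 - (b₂ - 3 * b₃ * ζ₁) * ζ₁ - 2 * b₃ = 0 ∧
    b₁ * ζ₁ ^ 2 + b₂ * ζ₁ + b₃ + (1 / 2) * ζ₁ ^ 2 * (1 - ζ₁ ^ 2) = 0 ∧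
    b₁ ^ 2 * b₃ - (1 / 2) * ζ₁ ^ 2 = 0 ∧
    b₁ * b₂ * ζ₁ + 2 * b₂ * b₃ * ζ₁ + b₁ * b₃ * (ζ₁ ^ 2 + 2) +
      (3 / 2 + 2 * Q) * ζ₁ ^ 2 = 0 := by
  have hb₁_ne : b₁ ≠ 0 := by positivity
  have hζ₁_sq : 2 * b₁ ^ 2 * ζ₁ ^ 2 = 2 * b₁ ^ 3 + b₁ ^ 2 - 1 :=
    hζ₁ ▸ Cardioid.two_mul_sq_mul_sq_sqrt hb₁
  subst hb₂ hb₃ hQ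
  exact ⟨Cardioid.critical_point_eq hb₁_ne hζ₁_sq, Cardioid.fixed_point_eq hb₁_ne hζ₁_sq,
    Cardioid.first_moment_eq hb₁_ne hζ₁_sq, Cardioid.zeroth_moment_eq hb₁_ne hζ₁_sq⟩
end

section
/- Let d ≥ 1 be an integer, let h be analytic in a neighborhood of a point z ∈ ℂ with z ≠ 1 and h(z) ≠ 0, and set g(w) = (w − 1)^d·h(w). Then 2·|g(z)|²·Re(1 + z·g'(z)/g(z)) = 2·|z − 1|^{2(d−1)}·|h(z)|²·( |z − 1|²·Re(z·h'(z)/h(z)) + (d+1)·( |z − (d+2)/(2d+2)|² − (d/(2d+2))² ) ). -/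
/-! Since `g'/g = d/(z - 1) + h'/h`, the quantity `|g|² Re(1 + z g'/g)` splits as
`|z - 1|^{2d} |h|² Re(z h'/h)` plus `|z - 1|^{2(d-1)} |h|²` times
`|z - 1|² Re(1 + d z/(z - 1)) = |z - 1|² + d (|z|² - Re z)`, a real quadratic in `z` whose level
set `0` is the circle of centre `(d+2)/(2d+2)` and radius `d/(2d+2)`. -/

open Complex ComplexConjugate

theorem logDeriv_sub_pow_mul {𝕜 : Type*} [NontriviallyNormedField 𝕜] {h : 𝕜 → 𝕜} {a z : 𝕜}
    (n : ℕ) (hz : z ≠ a) (hh : DifferentiableAt 𝕜 h z) (hhz : h z ≠ 0) :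
    logDeriv (fun w => (w - a) ^ n * h w) z = n / (z - a) + logDeriv h z := by
  rw [logDeriv_mul (f := fun w => (w - a) ^ n) z (pow_ne_zero n (sub_ne_zero.mpr hz)) hhz
    (by fun_prop) hh, logDeriv_fun_pow (by fun_prop)]
  simp [logDeriv_apply, div_eq_mul_inv]

theorem sq_norm_mul_re_div (u w : ℂ) : ‖w‖ ^ 2 * (u / w).re = (u * conj w).re := by
  rcases eq_or_ne w 0 with rfl | hw
  · simp
  · rw [div_re, Complex.sq_norm, mul_re, conj_re, conj_im]
    field_simp [(normSq_pos.mpr hw).ne']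
    ring

theorem sq_norm_sub_one_mul_re_one_add_mul_div (t : ℝ) (ht : t + 1 ≠ 0) (z : ℂ) :
    ‖z - 1‖ ^ 2 * (1 + (t * z / (z - 1)).re) =
      (t + 1) * (‖z - ((t : ℂ) + 2) / (2 * (t : ℂ) + 2)‖ ^ 2 - (t / (2 * t + 2)) ^ 2) := by
  have hcentre : ((t : ℂ) + 2) / (2 * (t : ℂ) + 2) = (((t + 2) / (2 * t + 2) : ℝ) : ℂ) := by
    push_cast; ring
  have h2 : 2 * t + 2 ≠ 0 := by contrapose! ht; linarith
  rw [mul_add, sq_norm_mul_re_div, hcentre, Complex.sq_norm, Complex.sq_norm, normSq_apply,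
    normSq_apply]
  simp only [mul_re, mul_im, sub_re, sub_im, conj_re, conj_im, ofReal_re, ofReal_im, one_re,
    one_im]
  field_simp
  ring

/-- For an integer `d ≥ 1`, a function `h` analytic at `z ≠ 1` with
`h(z) ≠ 0`, and `g(w) = (w−1)^d h(w)`, one has the identity
`2|g(z)|² Re(1 + z g'(z)/g(z)) = 2|z−1|^{2(d−1)} |h(z)|² (|z−1|² Re(z h'(z)/h(z))
  + (d+1)(|z − (d+2)/(2d+2)|² − (d/(2d+2))²))`. -/
theorem laplacian_identity_near_boundary_zero
    (d : ℕ) (hd : 1 ≤ d)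
    (z : ℂ) (hz : z ≠ 1)
    (h : ℂ → ℂ) (hh : AnalyticAt ℂ h z) (hhz : h z ≠ 0)
    (g : ℂ → ℂ) (hg : g = fun w => (w - 1) ^ d * h w) :
    2 * ‖g z‖ ^ 2 * (1 + z * deriv g z / g z).re =
      2 * ‖z - 1‖ ^ (2 * (d - 1)) * ‖h z‖ ^ 2 *
        (‖z - 1‖ ^ 2 * (z * deriv h z / h z).re +
          ((d : ℝ) + 1) *
            (‖z - ((d : ℂ) + 2) / (2 * (d : ℂ) + 2)‖ ^ 2 -
              ((d : ℝ) / (2 * (d : ℝ) + 2)) ^ 2)) := by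
  subst hg
  have hlog : z * deriv (fun w => (w - 1) ^ d * h w) z / ((z - 1) ^ d * h z) =
      d * z / (z - 1) + z * deriv h z / h z := by
    rw [mul_div_assoc, ← logDeriv_apply, logDeriv_sub_pow_mul d hz hh.differentiableAt hhz,
      logDeriv_apply]
    ring
  have hnorm : ‖(z - 1) ^ d * h z‖ ^ 2 = ‖z - 1‖ ^ (2 * (d - 1)) * ‖z - 1‖ ^ 2 * ‖h z‖ ^ 2 := by
    rw [norm_mul, norm_pow, mul_pow, ← pow_mul, ← pow_add]
    congr 2
    omega
  have hcircle := sq_norm_sub_one_mul_re_one_add_mul_div d (by positivity) z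
  push_cast at hcircle
  simp only [hlog, hnorm, add_re, one_re]
  linear_combination 2 * ‖z - 1‖ ^ (2 * (d - 1)) * ‖h z‖ ^ 2 * hcircle
end

section
/- Let b ∈ ℂ ∖ {0}, let q ∈ ℝ, let m ≥ n ≥ 0 be integers, let ω₁, …, ω_m ∈ ℂ ∖ {0} be pairwise distinct with ω_k·conj(ω_j) ≠ 1 for all k, j, and let ζ₁, …, ζ_n ∈ ℂ with |ζ_j| > 1 and ζ_j ≠ ω_k for all j, k. Set g(ζ) = b·∏_{k=1}^m (ζ − ω_k) / ∏_{j=1}^n (ζ − ζ_j). For 1 ≤ k ≤ m define A_k = (q/|b|²)·∏_{j=1}^n (ω_k − ζ_j)·∏_{j=1}^n conj(1/conj(ω_k) − ζ_j) / [ ∏_{j≠k} (ω_k − ω_j) · ∏_{j=1}^m conj(1/conj(ω_k) − ω_j) ]; define A_∞ = q·∏_{j=1}^n conj(ζ_j)/( |b|²·∏_{j=1}^m conj(ω_j) ) if m = n, and A_∞ = 0 if m > n; and define A₀ ∈ ℂ by Re A₀ = Re A_∞ + Re Σ_{k=1}^m A_k/ω_k and Im A₀ = Im Σ_{|ω_j|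 > 1} 2A_j/ω_j. Then the function P(ζ) = A₀ + Σ_{|ω_j| > 1} 2A_j/(ζ − ω_j) + Σ_{|ω_j| < 1} 2·conj(A_j)·ζ/(1 − conj(ω_j)·ζ) is analytic in a neighborhood of the closed unit disk, satisfies Re P(ζ) = q/|g(ζ)|² for every ζ with |ζ| = 1, and satisfies Im P(0) = 0. -/
/-!
On the unit circle `conj ζ = ζ⁻¹`, so `(ζ - a) (1 - conj a ζ) = ζ ‖ζ - a‖²` and `q / ‖g ζ‖²` is the
value at `ζ` of the rational function
`R = (q / ‖b‖²) X^(m-n) ∏ (X - ζ_j) (1 - conj ζ_j X) / ∏ (X - ω_k) (1 - conj ω_k X)`.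
Its numerator has degree at most `2m`, and its denominator has the `2m` simple zeros `ω_k` and
`1 / conj ω_k`. The coefficient `A_k` is the residue of `R` at `ω_k`, and the symmetry
`R (1 / conj ζ) = conj (R ζ)` turns it into the residue at `1 / conj ω_k`. After clearing
denominators, the numerator of `R - ∑ (A_k / (ζ - ω_k) + conj A_k ζ / (1 - conj ω_k ζ))` and the
denominator vanish at all `2m` poles and have degree at most `2m`, so they are proportional: the
difference is a constant, read off at `ζ = 0`. On the circle the two fractions of each pair are
complex conjugate, and `P` keeps, doubled, the one that is holomorphic near the closed disk, so
`Re P = Re R = q / ‖g‖²`.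
-/

open Complex Metric Finset Polynomial ComplexConjugate

noncomputable section

theorem Polynomial.eval_mul_eval_eq_of_eval_eq_zero {R : Type*} [CommRing R] [IsDomain R]
    {p Φ : R[X]} {s : Finset R} (hp : p.natDegree ≤ #s) (hΦ : Φ.natDegree ≤ #s)
    (hps : ∀ z ∈ s, p.eval z = 0) (hΦs : ∀ z ∈ s, Φ.eval z = 0) (x y : R) :
    p.eval x * Φ.eval y = p.eval y * Φ.eval x := by
  classical
  by_cases hy : y ∈ s
  · simp [hps y hy, hΦs y hy]
  have hzero : C (Φ.eval y) * p - C (p.eval y) * Φ = 0 := by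
    refine eq_zero_of_natDegree_lt_card_of_eval_eq_zero' _ (insert y s) ?_ ?_
    · intro z hz
      rcases Finset.mem_insert.mp hz with rfl | hz
      · simp [mul_comm]
      · simp [hps z hz, hΦs z hz]
    · rw [Finset.card_insert_of_notMem hy, Nat.lt_succ_iff]
      exact (natDegree_sub_le _ _).trans (max_le (natDegree_C_mul_le _ _ |>.trans hp)
        (natDegree_C_mul_le _ _ |>.trans hΦ))
  simpa [sub_eq_zero, mul_comm] using congrArg (eval x) hzero

theorem Polynomial.natDegree_prod_le_mul_card {ι R : Type*} [CommSemiring R]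
    (s : Finset ι) (ℓ : ι → R[X]) {d : ℕ} (hℓ : ∀ i ∈ s, (ℓ i).natDegree ≤ d) :
    (∏ i ∈ s, ℓ i).natDegree ≤ d * #s := by
  refine (natDegree_prod_le _ _).trans ?_
  rw [mul_comm]
  exact sum_le_card_nsmul _ _ _ hℓ

theorem Polynomial.natDegree_sum_mul_prod_erase_le {ι R : Type*} [CommSemiring R] [DecidableEq ι]
    (s : Finset ι) (n ℓ : ι → R[X]) {d : ℕ} (hn : ∀ i ∈ s, (n i).natDegree ≤ d)
    (hℓ : ∀ i ∈ s, (ℓ i).natDegree ≤ d) :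
    (∑ i ∈ s, n i * ∏ j ∈ s.erase i, ℓ j).natDegree ≤ d * #s := by
  refine natDegree_sum_le_of_forall_le _ _ fun i hi => ?_
  have hprod : (∏ j ∈ s.erase i, ℓ j).natDegree ≤ d * (#s - 1) := by
    refine (natDegree_prod_le _ _).trans ?_
    rw [← card_erase_of_mem hi, mul_comm]
    exact sum_le_card_nsmul _ _ _ fun j hj => hℓ j (mem_of_mem_erase hj)
  have hs : 1 ≤ #s := card_pos.mpr ⟨i, hi⟩
  calc (n i * ∏ j ∈ s.erase i, ℓ j).natDegree ≤ d + d * (#s - 1) :=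
        natDegree_mul_le.trans (add_le_add (hn i hi) hprod)
    _ = d * #s := by rw [← mul_one_add, Nat.add_sub_cancel' hs]

theorem Finset.sum_div_eq_sum_mul_prod_erase_div {ι K : Type*} [Field K] [DecidableEq ι]
    (s : Finset ι) (n ℓ : ι → K) (hℓ : ∀ i ∈ s, ℓ i ≠ 0) :
    ∑ i ∈ s, n i / ℓ i = (∑ i ∈ s, n i * ∏ j ∈ s.erase i, ℓ j) / ∏ i ∈ s, ℓ i := by
  rw [eq_div_iff (prod_ne_zero_iff.mpr hℓ), sum_mul]
  refine sum_congr rfl fun i hi => ?_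
  rw [← mul_prod_erase s ℓ hi, div_mul_eq_mul_div, mul_div_assoc, mul_comm (ℓ i), mul_div_assoc,
    div_self (hℓ i hi), mul_one]

theorem Finset.sum_mul_prod_erase_eq_of_eq_zero {ι R : Type*} [CommSemiring R] [DecidableEq ι]
    (s : Finset ι) (n ℓ : ι → R) {k : ι} (hk : k ∈ s) (hℓk : ℓ k = 0) :
    ∑ i ∈ s, n i * ∏ j ∈ s.erase i, ℓ j = n k * ∏ j ∈ s.erase k, ℓ j :=
  sum_eq_single_of_mem k hk fun i _ hik => by
    rw [prod_eq_zero (mem_erase.mpr ⟨Ne.symm hik, hk⟩) hℓk, mul_zero]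

section PairFractions

variable {K ι : Type*} [Field K] [Fintype ι]

def pairPoly (ω β : ι → K) : K[X] :=
  ∏ i, (X - C (ω i)) * (1 - C (β i) * X)

def pairFractionSum (a b ω β : ι → K) (x : K) : K :=
  ∑ i, (a i / (x - ω i) + b i * x / (1 - β i * x))

@[simp]
theorem eval_pairPoly (ω β : ι → K) (x : K) :
    (pairPoly ω β).eval x = ∏ i, (x - ω i) * (1 - β i * x) := by
  simp [pairPoly, eval_prod]

theorem natDegree_pairPoly_le (ω β : ι → K) : (pairPoly ω β).natDegree ≤ 2 * Fintype.card ι :=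
  natDegree_prod_le_mul_card _ _ fun _ _ => by compute_degree

variable [DecidableEq ι]

def pairNumerator (a b ω β : ι → K) : K[X] :=
  ∑ i, (C (a i) * (1 - C (β i) * X) + C (b i) * X * (X - C (ω i))) *
    ∏ j ∈ univ.erase i, (X - C (ω j)) * (1 - C (β j) * X)

variable (a b ω β : ι → K)

theorem eval_pairNumerator (x : K) :
    (pairNumerator a b ω β).eval x = ∑ i, (a i * (1 - β i * x) + b i * x * (x - ω i)) *
      ∏ j ∈ univ.erase i, (x - ω j) * (1 - β j * x) := by
  simp [pairNumerator, eval_prod, eval_finsetSum]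

theorem natDegree_pairNumerator_le : (pairNumerator a b ω β).natDegree ≤ 2 * Fintype.card ι :=
  natDegree_sum_mul_prod_erase_le _ _ _ (fun _ _ => by compute_degree) fun _ _ => by compute_degree

theorem pairFractionSum_eq_div {x : K} (hx : (pairPoly ω β).eval x ≠ 0) :
    pairFractionSum a b ω β x = (pairNumerator a b ω β).eval x / (pairPoly ω β).eval x := by
  rw [eval_pairPoly] at hx ⊢
  have hℓ : ∀ i ∈ univ, (x - ω i) * (1 - β i * x) ≠ 0 := prod_ne_zero_iff.mp hx
  rw [eval_pairNumerator, ← sum_div_eq_sum_mul_prod_erase_div _ _ _ hℓ, pairFractionSum]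
  refine sum_congr rfl fun i hi => ?_
  obtain ⟨h₁, h₂⟩ := mul_ne_zero_iff.mp (hℓ i hi)
  rw [div_add_div _ _ h₁ h₂]
  ring

theorem eval_pairNumerator_left (k : ι) :
    (pairNumerator a b ω β).eval (ω k) =
      a k * (1 - β k * ω k) * ∏ j ∈ univ.erase k, (ω k - ω j) * (1 - β j * ω k) := by
  rw [eval_pairNumerator, sum_mul_prod_erase_eq_of_eq_zero _ _ _ (mem_univ k) (by simp)]
  ring

theorem eval_pairNumerator_right {k : ι} (hβ : β k ≠ 0) :
    (pairNumerator a b ω β).eval (β k)⁻¹ = b k * (β k)⁻¹ * ((β k)⁻¹ - ω k) *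
      ∏ j ∈ univ.erase k, ((β k)⁻¹ - ω j) * (1 - β j * (β k)⁻¹) := by
  rw [eval_pairNumerator, sum_mul_prod_erase_eq_of_eq_zero _ _ _ (mem_univ k)
    (by rw [mul_inv_cancel₀ hβ, sub_self, mul_zero]), mul_inv_cancel₀ hβ]
  ring

theorem div_pairPoly_sub_pairFractionSum_eq {N : K[X]} (hN : N.natDegree ≤ 2 * Fintype.card ι)
    (hβ : ∀ i, β i ≠ 0) (hnodes : Function.Injective (Sum.elim ω fun i => (β i)⁻¹))
    (ha : ∀ k, N.eval (ω k) = (pairNumerator a b ω β).eval (ω k))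
    (hb : ∀ k, N.eval (β k)⁻¹ = (pairNumerator a b ω β).eval (β k)⁻¹)
    {x y : K} (hx : (pairPoly ω β).eval x ≠ 0) (hy : (pairPoly ω β).eval y ≠ 0) :
    N.eval x / (pairPoly ω β).eval x - pairFractionSum a b ω β x =
      N.eval y / (pairPoly ω β).eval y - pairFractionSum a b ω β y := by
  set nodes : Finset K := univ.map ⟨_, hnodes⟩
  have hcard : #nodes = 2 * Fintype.card ι := by simp [nodes, two_mul]
  have hroot : ∀ z ∈ nodes,
      (N - pairNumerator a b ω β).eval z = 0 ∧ (pairPoly ω β).eval z = 0 := by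
    simp only [nodes, mem_map, mem_univ, true_and, Function.Embedding.coeFn_mk]
    rintro z ⟨k | k, rfl⟩ <;> simp only [Sum.elim_inl, Sum.elim_inr, eval_pairPoly]
    · exact ⟨by simp [ha], prod_eq_zero (mem_univ k) (by simp)⟩
    · exact ⟨by simp [hb], prod_eq_zero (mem_univ k) (by simp [mul_inv_cancel₀ (hβ k)])⟩
  have hcross := eval_mul_eval_eq_of_eval_eq_zero
    (hcard ▸ (natDegree_sub_le _ _).trans (max_le hN (natDegree_pairNumerator_le a b ω β)))
    (hcard ▸ natDegree_pairPoly_le ω β) (fun z hz => (hroot z hz).1)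
    (fun z hz => (hroot z hz).2) x y
  rw [pairFractionSum_eq_div a b ω β hx, pairFractionSum_eq_div a b ω β hy, ← sub_div, ← sub_div,
    div_eq_div_iff hx hy]
  simpa using hcross

end PairFractions

section UnitCircle

variable {ι : Type*} [Fintype ι]

theorem Complex.norm_ne_one_of_mul_conj_ne_one {w : ℂ} (h : w * conj w ≠ 1) : ‖w‖ ≠ 1 := by
  intro hw
  rw [mul_conj', hw] at h
  norm_num at h

theorem conj_mul_div_one_sub_of_norm_eq_one {z : ℂ} (hz : ‖z‖ = 1) (a w : ℂ) :
    conj a * z / (1 - conj w * z) = conj (a / (z - w)) := by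
  have hz0 : z ≠ 0 := by rintro rfl; simp at hz
  rw [map_div₀, map_sub, ← inv_eq_conj hz,
    show z⁻¹ - conj w = (1 - conj w * z) / z by field_simp, div_div_eq_mul_div]

theorem sub_mul_one_sub_conj_mul_of_norm_eq_one {z : ℂ} (hz : ‖z‖ = 1) (w : ℂ) :
    (z - w) * (1 - conj w * z) = z * ‖z - w‖ ^ 2 := by
  have hz0 : z ≠ 0 := by rintro rfl; simp at hz
  rw [← mul_conj', map_sub, ← inv_eq_conj hz]
  field_simp

theorem eval_pairPoly_of_norm_eq_one {z : ℂ} (hz : ‖z‖ = 1) (w : ι → ℂ) :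
    (pairPoly w (conj ∘ w)).eval z = z ^ Fintype.card ι * ‖∏ i, (z - w i)‖ ^ 2 := by
  simp only [eval_pairPoly, Function.comp_apply, sub_mul_one_sub_conj_mul_of_norm_eq_one hz,
    prod_mul_distrib, prod_const, card_univ, norm_prod]
  push_cast
  rw [Finset.prod_pow]

theorem eval_pairPoly_ne_zero_of_norm_eq_one {z : ℂ} (hz : ‖z‖ = 1)
    {w : ι → ℂ} (hw : ∀ k, ‖w k‖ ≠ 1) : (pairPoly w (conj ∘ w)).eval z ≠ 0 := by
  have hz0 : z ≠ 0 := by rintro rfl; simp at hz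
  rw [eval_pairPoly_of_norm_eq_one hz]
  refine mul_ne_zero (pow_ne_zero _ hz0) ?_
  exact pow_ne_zero 2 (ofReal_ne_zero.mpr (norm_ne_zero_iff.mpr
    (prod_ne_zero_iff.mpr fun k _ => sub_ne_zero.mpr fun h => hw k (h ▸ hz))))

theorem re_pairFractionSum_of_norm_eq_one {z : ℂ} (hz : ‖z‖ = 1) (A ω : ι → ℂ) :
    (pairFractionSum A (conj ∘ A) ω (conj ∘ ω) z).re = ∑ k, 2 * (A k / (z - ω k)).re := by
  simp only [pairFractionSum, Function.comp_apply, conj_mul_div_one_sub_of_norm_eq_one hz,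
    re_sum, add_re, conj_re]
  exact sum_congr rfl fun _ _ => by ring

theorem re_sum_filter_add_sum_filter_of_norm_eq_one {z : ℂ} (hz : ‖z‖ = 1) (A ω : ι → ℂ)
    (hω : ∀ k, ‖ω k‖ ≠ 1) :
    (∑ j ∈ univ.filter (fun j => 1 < ‖ω j‖), 2 * A j / (z - ω j)).re +
      (∑ j ∈ univ.filter (fun j => ‖ω j‖ < 1),
        2 * conj (A j) * z / (1 - conj (ω j) * z)).re =
      (pairFractionSum A (conj ∘ A) ω (conj ∘ ω) z).re := by
  have hfilter : univ.filter (fun j => ‖ω j‖ < 1) =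
      univ.filter (fun j => ¬ 1 < ‖ω j‖) :=
    filter_congr fun j _ => ⟨fun h => h.not_gt, fun h => (not_lt.mp h).lt_of_ne (hω j)⟩
  rw [re_pairFractionSum_of_norm_eq_one hz, hfilter, ← sum_filter_add_sum_filter_not univ
    (fun j => 1 < ‖ω j‖) (fun k => 2 * (A k / (z - ω k)).re), re_sum, re_sum]
  congr 1 <;> refine sum_congr rfl fun j _ => ?_
  · simp [mul_div_assoc]
  · rw [mul_assoc, mul_div_assoc, conj_mul_div_one_sub_of_norm_eq_one hz]
    simp [-map_div₀]

theorem sub_mul_one_sub_conj_mul_inv_conj {z : ℂ} (hz : z ≠ 0) (w : ℂ) :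
    ((conj z)⁻¹ - w) * (1 - conj w * (conj z)⁻¹) =
      conj ((z - w) * (1 - conj w * z)) / conj z ^ 2 := by
  have hz' : conj z ≠ 0 := (_root_.map_ne_zero _).mpr hz
  simp only [map_mul, map_sub, map_one, conj_conj]
  field_simp

theorem eval_pairPoly_inv_conj {z : ℂ} (hz : z ≠ 0) (w : ι → ℂ) :
    (pairPoly w (conj ∘ w)).eval (conj z)⁻¹ =
      conj ((pairPoly w (conj ∘ w)).eval z) / conj z ^ (2 * Fintype.card ι) := by
  simp only [eval_pairPoly, Function.comp_apply, sub_mul_one_sub_conj_mul_inv_conj hz, map_prod,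
    prod_div_distrib, prod_const, card_univ, pow_mul]

end UnitCircle

section CircleNumerator

variable {ι κ : Type*} [Fintype ι] [Fintype κ]

/-- The numerator of `R`, with `c = q / ‖b‖²` and `d = m - n`. -/
def circleNumerator (c : ℂ) (d : ℕ) (ζp : κ → ℂ) : ℂ[X] :=
  C c * X ^ d * pairPoly ζp (conj ∘ ζp)

@[simp]
theorem eval_circleNumerator (c : ℂ) (d : ℕ) (ζp : κ → ℂ) (x : ℂ) :
    (circleNumerator c d ζp).eval x = c * x ^ d * ∏ j, (x - ζp j) * (1 - conj (ζp j) * x) := by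
  simp [circleNumerator]

theorem natDegree_circleNumerator_le (c : ℂ) (d : ℕ) (ζp : κ → ℂ) :
    (circleNumerator c d ζp).natDegree ≤ d + 2 * Fintype.card κ :=
  natDegree_mul_le.trans (add_le_add (natDegree_C_mul_X_pow_le c d) (natDegree_pairPoly_le _ _))

theorem eval_circleNumerator_inv_conj {c : ℂ} (hc : conj c = c) (d : ℕ) (ζp : κ → ℂ) {z : ℂ}
    (hz : z ≠ 0) : (circleNumerator c d ζp).eval (conj z)⁻¹ =
      conj ((circleNumerator c d ζp).eval z) / conj z ^ (2 * (d + Fintype.card κ)) := by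
  have hz' : conj z ≠ 0 := (_root_.map_ne_zero _).mpr hz
  have hpair := eval_pairPoly_inv_conj hz ζp
  simp only [eval_pairPoly, Function.comp_apply] at hpair
  rw [eval_circleNumerator, eval_circleNumerator, hpair, map_mul, map_mul, hc, map_pow, inv_pow]
  field_simp
  ring

theorem circleNumerator_div_pairPoly_of_norm_eq_one {z : ℂ} (hz : ‖z‖ = 1) (r : ℝ) {d : ℕ}
    (hd : d + Fintype.card κ = Fintype.card ι) (ζp : κ → ℂ) (ω : ι → ℂ) :
    (circleNumerator (r : ℂ) d ζp).eval z / (pairPoly ω (conj ∘ ω)).eval z =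
      ((r * ‖∏ j, (z - ζp j)‖ ^ 2 / ‖∏ k, (z - ω k)‖ ^ 2 : ℝ) : ℂ) := by
  have hz0 : z ≠ 0 := by rintro rfl; simp at hz
  simp only [circleNumerator, eval_mul, eval_C, eval_pow, eval_X,
    eval_pairPoly_of_norm_eq_one hz, ← hd, pow_add]
  rw [show (r : ℂ) * z ^ d * (z ^ Fintype.card κ * ‖∏ j, (z - ζp j)‖ ^ 2) =
      z ^ d * z ^ Fintype.card κ * (r * ‖∏ j, (z - ζp j)‖ ^ 2) by ring,
    mul_div_mul_left _ _ (by positivity)]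
  push_cast
  rfl

theorem eval_zero_circleNumerator_div {m n : ℕ} (hnm : n ≤ m) (c : ℂ) (ζp : Fin n → ℂ)
    (ω : Fin m → ℂ) :
    (circleNumerator c (m - n) ζp).eval 0 / (pairPoly ω (conj ∘ ω)).eval 0 =
      if m = n then c * (∏ j, ζp j) / ∏ k, ω k else 0 := by
  rcases eq_or_ne m n with rfl | hmn
  · simp only [if_true, eval_circleNumerator, eval_pairPoly, Nat.sub_self, pow_zero, zero_sub,
      mul_zero, sub_zero, mul_one, prod_neg]
    rw [mul_div_assoc, mul_div_mul_left _ _ (pow_ne_zero _ (neg_ne_zero.mpr one_ne_zero)),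
      ← mul_div_assoc]
  · simp [hmn, zero_pow (Nat.sub_ne_zero_of_lt (lt_of_le_of_ne hnm hmn.symm))]

variable [DecidableEq ι]

theorem eval_circleNumerator_eq_residue {c : ℂ} {d : ℕ} (hd : d + Fintype.card κ = Fintype.card ι)
    (ζp : κ → ℂ) {ω : ι → ℂ} (hω : Function.Injective ω) {k : ι} (hωk : ω k ≠ 0)
    (hrefl : ∀ j, ω k * conj (ω j) ≠ 1) {a : ℂ}
    (ha : a = c * ((∏ j, (ω k - ζp j)) * ∏ j, conj (1 / conj (ω k) - ζp j)) /
      ((∏ j ∈ univ.erase k, (ω k - ω j)) * ∏ j, conj (1 / conj (ω k) - ω j))) :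
    (circleNumerator c d ζp).eval (ω k) =
      a * (1 - conj (ω k) * ω k) * ∏ j ∈ univ.erase k, (ω k - ω j) * (1 - conj (ω j) * ω k) := by
  have hconj : ∀ x, conj (1 / conj (ω k) - x) = (1 - conj x * ω k) / ω k := fun x => by
    simp only [map_sub, map_div₀, map_one, conj_conj]
    field_simp
  have hdist : ∏ j ∈ univ.erase k, (ω k - ω j) ≠ 0 :=
    prod_ne_zero_iff.mpr fun j hj => sub_ne_zero.mpr (hω.ne (ne_of_mem_erase hj).symm)
  have hrefl' : ∏ j ∈ univ.erase k, (1 - conj (ω j) * ω k) ≠ 0 :=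
    prod_ne_zero_iff.mpr fun j _ h => hrefl j (by linear_combination -h)
  have hkk : 1 - conj (ω k) * ω k ≠ 0 := fun h => hrefl k (by linear_combination -h)
  rw [ha, eval_circleNumerator, prod_congr rfl fun x _ => hconj (ζp x),
    prod_congr rfl fun x _ => hconj (ω x), prod_div_distrib, prod_div_distrib, prod_const,
    prod_const, card_univ, card_univ, ← mul_prod_erase _ (fun j => 1 - conj (ω j) * ω k)
    (mem_univ k), prod_mul_distrib, prod_mul_distrib, ← hd, pow_add]
  generalize ∏ j ∈ univ.erase k, (ω k - ω j) = P₁ at *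
  generalize ∏ j ∈ univ.erase k, (1 - conj (ω j) * ω k) = P₂ at *
  generalize 1 - conj (ω k) * ω k = r at *
  field_simp

theorem eval_inv_conj_eq_of_eval_eq {N : ℂ[X]}
    (hN : ∀ z ≠ 0, N.eval (conj z)⁻¹ = conj (N.eval z) / conj z ^ (2 * Fintype.card ι))
    {ω : ι → ℂ} {k : ι} (hωk : ω k ≠ 0) {a : ℂ}
    (ha : N.eval (ω k) = a * (1 - conj (ω k) * ω k) *
      ∏ j ∈ univ.erase k, (ω k - ω j) * (1 - conj (ω j) * ω k)) :
    N.eval (conj (ω k))⁻¹ = conj a * (conj (ω k))⁻¹ * ((conj (ω k))⁻¹ - ω k) *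
      ∏ j ∈ univ.erase k, ((conj (ω k))⁻¹ - ω j) * (1 - conj (ω j) * (conj (ω k))⁻¹) := by
  have hωk' : conj (ω k) ≠ 0 := (_root_.map_ne_zero _).mpr hωk
  have hcard : Fintype.card ι = #(univ.erase k) + 1 := by
    rw [card_erase_of_mem (mem_univ k), card_univ,
      Nat.sub_add_cancel (Fintype.card_pos_iff.mpr ⟨k⟩)]
  rw [hN _ hωk, ha, prod_congr rfl fun j _ => sub_mul_one_sub_conj_mul_inv_conj hωk (ω j),
    prod_div_distrib, prod_const, hcard]
  simp only [map_mul, map_sub, map_one, map_prod, conj_conj]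
  field_simp
  ring

theorem circleNumerator_div_pairPoly_eq {c : ℂ} (hc : conj c = c) {d : ℕ}
    (hd : d + Fintype.card κ = Fintype.card ι) (ζp : κ → ℂ) {ω : ι → ℂ}
    (hω : Function.Injective ω) (hω0 : ∀ k, ω k ≠ 0) (hrefl : ∀ k j, ω k * conj (ω j) ≠ 1)
    {A : ι → ℂ}
    (hA : ∀ k, A k = c * ((∏ j, (ω k - ζp j)) * ∏ j, conj (1 / conj (ω k) - ζp j)) /
      ((∏ j ∈ univ.erase k, (ω k - ω j)) * ∏ j, conj (1 / conj (ω k) - ω j)))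
    {x : ℂ} (hx : (pairPoly ω (conj ∘ ω)).eval x ≠ 0) :
    (circleNumerator c d ζp).eval x / (pairPoly ω (conj ∘ ω)).eval x =
      (circleNumerator c d ζp).eval 0 / (pairPoly ω (conj ∘ ω)).eval 0 + ∑ k, A k / ω k +
        pairFractionSum A (conj ∘ A) ω (conj ∘ ω) x := by
  have h0 : (pairPoly ω (conj ∘ ω)).eval 0 ≠ 0 := by
    simpa using prod_ne_zero_iff.mpr fun k _ => neg_ne_zero.mpr (hω0 k)
  have hβ : ∀ k, (conj ∘ ω) k ≠ 0 := fun k => (_root_.map_ne_zero _).mpr (hω0 k)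
  have hnodes : Function.Injective (Sum.elim ω fun k => ((conj ∘ ω) k)⁻¹) :=
    hω.sumElim (inv_injective.comp ((starRingEnd ℂ).injective.comp hω)) fun k j h =>
      hrefl k j (by rw [h]; exact inv_mul_cancel₀ (hβ j))
  have hres : ∀ k, (circleNumerator c d ζp).eval (ω k) = A k * (1 - conj (ω k) * ω k) *
      ∏ j ∈ univ.erase k, (ω k - ω j) * (1 - conj (ω j) * ω k) := fun k =>
    eval_circleNumerator_eq_residue hd ζp hω (hω0 k) (hrefl k) (hA k)
  have hN : ∀ z ≠ 0, (circleNumerator c d ζp).eval (conj z)⁻¹ =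
      conj ((circleNumerator c d ζp).eval z) / conj z ^ (2 * Fintype.card ι) := fun z hz => by
    rw [eval_circleNumerator_inv_conj hc d ζp hz, hd]
  have hdeg : (circleNumerator c d ζp).natDegree ≤ 2 * Fintype.card ι :=
    (natDegree_circleNumerator_le c d ζp).trans (by omega)
  have ha : ∀ k, (circleNumerator c d ζp).eval (ω k) =
      (pairNumerator A (conj ∘ A) ω (conj ∘ ω)).eval (ω k) := fun k => by
    rw [hres k, eval_pairNumerator_left]
    rfl
  have hb : ∀ k, (circleNumerator c d ζp).eval ((conj ∘ ω) k)⁻¹ =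
      (pairNumerator A (conj ∘ A) ω (conj ∘ ω)).eval ((conj ∘ ω) k)⁻¹ := fun k => by
    rw [eval_pairNumerator_right _ _ _ _ (hβ k)]
    exact eval_inv_conj_eq_of_eval_eq hN (hω0 k) (hres k)
  have key := div_pairPoly_sub_pairFractionSum_eq A (conj ∘ A) ω (conj ∘ ω) hdeg hβ hnodes ha hb
    hx h0
  have hF0 : pairFractionSum A (conj ∘ A) ω (conj ∘ ω) 0 = -∑ k, A k / ω k := by
    simp [pairFractionSum, div_neg]
  rw [hF0] at key
  linear_combination key

end CircleNumerator

theorem exists_isOpen_closedBall_subset_differentiableOn {ι : Type*} (s t : Finset ι)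
    (w α γ : ι → ℂ) (c : ℂ) (hs : ∀ j ∈ s, 1 < ‖w j‖) (ht : ∀ j ∈ t, ‖w j‖ < 1) :
    ∃ V : Set ℂ, IsOpen V ∧ closedBall (0 : ℂ) 1 ⊆ V ∧
      DifferentiableOn ℂ (fun ζ => c + ∑ j ∈ s, α j / (ζ - w j) +
        ∑ j ∈ t, γ j * ζ / (1 - conj (w j) * ζ)) V := by
  refine ⟨{ζ | (∏ j ∈ s, (ζ - w j)) * ∏ j ∈ t, (1 - conj (w j) * ζ) ≠ 0},
    isOpen_ne_fun (by fun_prop) continuous_const, fun ζ hζ => ?_, ?_⟩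
  · have hζ : ‖ζ‖ ≤ 1 := by simpa using hζ
    refine mul_ne_zero (prod_ne_zero_iff.mpr fun j hj => sub_ne_zero.mpr fun h => ?_)
      (prod_ne_zero_iff.mpr fun j hj => sub_ne_zero.mpr fun h => ?_)
    · exact (hs j hj).not_ge (h ▸ hζ)
    · have : ‖conj (w j) * ζ‖ < 1 := by
        rw [norm_mul, Complex.norm_conj]
        exact (mul_le_of_le_one_right (norm_nonneg _) hζ).trans_lt (ht j hj)
      simp [← h] at this
  · intro ζ hζ
    obtain ⟨hs', ht'⟩ := mul_ne_zero_iff.mp hζ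
    refine DifferentiableAt.differentiableWithinAt ?_
    refine ((differentiableAt_const c).add (DifferentiableAt.fun_sum fun j hj => ?_)).add
      (DifferentiableAt.fun_sum fun j hj => ?_)
    · exact (differentiableAt_const _).div (by fun_prop) (prod_ne_zero_iff.mp hs' j hj)
    · exact (by fun_prop : DifferentiableAt ℂ (fun ζ => γ j * ζ) ζ).div (by fun_prop)
        (prod_ne_zero_iff.mp ht' j hj)

theorem rational_poisson_integral_structure_general
    (b : ℂ) (q : ℝ)
    (m n : ℕ) (hmn : n ≤ m)
    (ω : Fin m → ℂ)
    (hω0 : ∀ k, ω k ≠ 0)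
    (hωdist : ∀ k j, k ≠ j → ω k ≠ ω j)
    (hωrefl : ∀ k j, ω k * (starRingEnd ℂ) (ω j) ≠ 1)
    (ζp : Fin n → ℂ)
    (g : ℂ → ℂ)
    (hg : g = fun ζ => b * (∏ k, (ζ - ω k)) / ∏ j, (ζ - ζp j))
    (A : Fin m → ℂ)
    (hA : ∀ k, A k =
      ((q : ℂ) / ((‖b‖ : ℂ)) ^ 2) *
        ((∏ j, (ω k - ζp j)) *
          ∏ j, (starRingEnd ℂ) (1 / (starRingEnd ℂ) (ω k) - ζp j)) /
        ((∏ j ∈ Finset.univ.erase k, (ω k - ω j)) *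
          ∏ j, (starRingEnd ℂ) (1 / (starRingEnd ℂ) (ω k) - ω j)))
    (Ainf : ℂ)
    (hAinf : Ainf = if m = n then
        (q : ℂ) * (∏ j, (starRingEnd ℂ) (ζp j)) /
          (((‖b‖ : ℂ)) ^ 2 * ∏ j, (starRingEnd ℂ) (ω j))
      else 0)
    (A₀ : ℂ)
    (hA₀re : A₀.re = Ainf.re + (∑ k, A k / ω k).re)
    (hA₀im : A₀.im =
      (∑ j ∈ Finset.univ.filter (fun j => 1 < ‖ω j‖), 2 * A j / ω j).im)
    (P : ℂ → ℂ)
    (hP : P = fun ζ => A₀ +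
      (∑ j ∈ Finset.univ.filter (fun j => 1 < ‖ω j‖), 2 * A j / (ζ - ω j)) +
      ∑ j ∈ Finset.univ.filter (fun j => ‖ω j‖ < 1),
        2 * (starRingEnd ℂ) (A j) * ζ / (1 - (starRingEnd ℂ) (ω j) * ζ)) :
    (∃ V : Set ℂ, IsOpen V ∧ closedBall (0 : ℂ) 1 ⊆ V ∧ DifferentiableOn ℂ P V) ∧
    (∀ ζ : ℂ, ‖ζ‖ = 1 → (P ζ).re = q / ‖g ζ‖ ^ 2) ∧
    (P 0).im = 0 := by
  subst hg hP
  have hω : Function.Injective ω := fun k j h => by_contra fun hkj => hωdist k j hkj h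
  have hω1 : ∀ k, ‖ω k‖ ≠ 1 := fun k => Complex.norm_ne_one_of_mul_conj_ne_one (hωrefl k k)
  have hc : (q : ℂ) / (‖b‖ : ℂ) ^ 2 = ((q / ‖b‖ ^ 2 : ℝ) : ℂ) := by push_cast; rfl
  have hd : m - n + Fintype.card (Fin n) = Fintype.card (Fin m) := by simp; omega
  have hAinf' : conj Ainf = if m = n then (q : ℂ) / (‖b‖ : ℂ) ^ 2 * (∏ j, ζp j) / ∏ k, ω k
      else 0 := by
    subst hAinf
    split_ifs
    · simp only [map_div₀, map_mul, map_prod, conj_conj, map_pow, conj_ofReal]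
      ring
    · exact map_zero _
  refine ⟨exists_isOpen_closedBall_subset_differentiableOn _ _ ω _ _ A₀
    (fun j hj => (mem_filter.mp hj).2) (fun j hj => (mem_filter.mp hj).2), fun ζ hζ => ?_, ?_⟩
  · have key := circleNumerator_div_pairPoly_eq (by rw [hc, conj_ofReal]) hd ζp hω hω0 hωrefl hA
      (eval_pairPoly_ne_zero_of_norm_eq_one hζ hω1)
    rw [eval_zero_circleNumerator_div hmn, ← hAinf', hc,
      circleNumerator_div_pairPoly_of_norm_eq_one hζ _ hd] at key
    have hre := congrArg re key
    simp only [ofReal_re, add_re, conj_re] at hre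
    simp only [add_re, add_assoc, re_sum_filter_add_sum_filter_of_norm_eq_one hζ A ω hω1, hA₀re,
      norm_div, norm_mul]
    rw [← add_assoc, ← hre, div_pow, mul_pow, div_div_eq_mul_div]
    ring
  · simp [hA₀im, div_neg, sum_neg_distrib]

/-- Explicit form of the Poisson integral for a rational `g`.
With `g(ζ) = b ∏(ζ − ω_k)/∏(ζ − ζ_j)` (zeros `ω_k` pairwise distinct, nonzero, no two related
by reflection in the unit circle; poles `ζ_j` outside the closed disk), and with the explicit
coefficients `A_k`, `A_∞`, `A₀`, the function
`P(ζ) = A₀ + Σ_{|ω_j|>1} 2A_j/(ζ−ω_j) + Σ_{|ω_j|<1} 2 conj(A_j) ζ/(1 − conj(ω_j)ζ)`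
is analytic in a neighborhood of the closed unit disk, has `Re P = q/|g|²` on the unit circle,
and satisfies `Im P(0) = 0`. -/
theorem rational_poisson_integral_structure
    (b : ℂ) (hb : b ≠ 0) (q : ℝ)
    (m n : ℕ) (hmn : n ≤ m)
    (ω : Fin m → ℂ)
    (hω0 : ∀ k, ω k ≠ 0)
    (hωdist : ∀ k j, k ≠ j → ω k ≠ ω j)
    (hωrefl : ∀ k j, ω k * (starRingEnd ℂ) (ω j) ≠ 1)
    (ζp : Fin n → ℂ)
    (hζp : ∀ j, 1 < ‖ζp j‖)
    (hζω : ∀ j k, ζp j ≠ ω k)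
    (g : ℂ → ℂ)
    (hg : g = fun ζ => b * (∏ k, (ζ - ω k)) / ∏ j, (ζ - ζp j))
    (A : Fin m → ℂ)
    (hA : ∀ k, A k =
      ((q : ℂ) / ((‖b‖ : ℂ)) ^ 2) *
        ((∏ j, (ω k - ζp j)) *
          ∏ j, (starRingEnd ℂ) (1 / (starRingEnd ℂ) (ω k) - ζp j)) /
        ((∏ j ∈ Finset.univ.erase k, (ω k - ω j)) *
          ∏ j, (starRingEnd ℂ) (1 / (starRingEnd ℂ) (ω k) - ω j)))
    (Ainf : ℂ)
    (hAinf : Ainf = if m = n then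
        (q : ℂ) * (∏ j, (starRingEnd ℂ) (ζp j)) /
          (((‖b‖ : ℂ)) ^ 2 * ∏ j, (starRingEnd ℂ) (ω j))
      else 0)
    (A₀ : ℂ)
    (hA₀re : A₀.re = Ainf.re + (∑ k, A k / ω k).re)
    (hA₀im : A₀.im =
      (∑ j ∈ Finset.univ.filter (fun j => 1 < ‖ω j‖), 2 * A j / ω j).im)
    (P : ℂ → ℂ)
    (hP : P = fun ζ => A₀ +
      (∑ j ∈ Finset.univ.filter (fun j => 1 < ‖ω j‖), 2 * A j / (ζ - ω j)) +
      ∑ j ∈ Finset.univ.filter (fun j => ‖ω j‖ < 1),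
        2 * (starRingEnd ℂ) (A j) * ζ / (1 - (starRingEnd ℂ) (ω j) * ζ)) :
    (∃ V : Set ℂ, IsOpen V ∧ closedBall (0 : ℂ) 1 ⊆ V ∧ DifferentiableOn ℂ P V) ∧
    (∀ ζ : ℂ, ‖ζ‖ = 1 → (P ζ).re = q / ‖g ζ‖ ^ 2) ∧
    (P 0).im = 0 :=
  rational_poisson_integral_structure_general b q m n hmn ω hω0 hωdist hωrefl ζp g hg A hA Ainf
    hAinf A₀ hA₀re hA₀im P hP

end
end
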